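/- arXiv:2111.05699 — 5 statements merged into one kernel-verified Lean document; each statement's English description precedes it below -/
import Mathlib

section
/- Let H = (V, E) be a hypergraph, let x̄ ∈ ℝ^E with x̄ ≥ 0, let β ≥ 0 be a real number, fix r ∈ V, and define f on nonempty subsets S ⊆ V by f(S) = β + x̄(E[S]) if r ∉ S and f(S) = x̄(E[S]) if r ∈ S. Then the infimum of Σ_{v∈V} y(v) over all y : V → ℝ satisfying Σ_{v∈S} y(v) ≥ f(S) for every nonempty S ⊆ V equals x̄(E) if and only if x̄(δ(𝒫)) ≥ β(|𝒫| − 1) for every partition 𝒫 of V into nonempty parts; moreover this infimum is always at least x̄(E). -/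
open Finset

variable {V α : Type*}

/-- `F[X]`: the subfamily of hyperedges of `F` contained in `X`. -/
def restrict [DecidableEq V] (edge : α → Finset V) (F : Finset α) (X : Finset V) : Finset α :=
  F.filter fun e => edge e ⊆ X

/-- `F` is a hyperforest of the hypergraph `(V, E)` (with hyperedges given by `edge`). -/
def IsHyperforest [DecidableEq V] (edge : α → Finset V) (E F : Finset α) : Prop :=
  F ⊆ E ∧ ∀ X : Finset V, X.Nonempty → (restrict edge F X).card ≤ X.card - 1

/-- `F` is a hypertree: a hyperforest with `|V| - 1` hyperedges. -/
def IsHypertree [Fintype V] [DecidableEq V] (edge : α → Finset V) (E F : Finset α) : Prop :=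
  IsHyperforest edge E F ∧ F.card = Fintype.card V - 1

/-- `Ps` is a family of pairwise disjoint nonempty sets whose union is `S`. -/
def IsPartitionOf [DecidableEq V] (Ps : Finset (Finset V)) (S : Finset V) : Prop :=
  (∀ P ∈ Ps, P.Nonempty) ∧ (∀ P ∈ Ps, ∀ Q ∈ Ps, P ≠ Q → Disjoint P Q) ∧ Ps.sup id = S

/-- `Ps` is a partition of the vertex set `V` into nonempty parts. -/
def IsPartition [Fintype V] [DecidableEq V] (Ps : Finset (Finset V)) : Prop :=
  IsPartitionOf Ps Finset.univ

/-- `δ_F(Ps)`: hyperedges of `F` contained in the union of the members of `Ps`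
and intersecting at least two members of `Ps`. -/
def delta [DecidableEq V] (edge : α → Finset V) (F : Finset α) (Ps : Finset (Finset V)) :
    Finset α :=
  F.filter fun e => edge e ⊆ Ps.sup id ∧
    2 ≤ (Ps.filter fun P => (edge e ∩ P).Nonempty).card

/-- The function `f(S) = β·[r ∉ S] + x̄(E[S])` used in the greedy/uncrossing algorithm. -/
def fAux [DecidableEq V] (edge : α → Finset V) (E : Finset α) (x : α → ℝ) (β : ℝ)
    (r : V) (S : Finset V) : ℝ :=
  (if r ∈ S then 0 else β) + ∑ e ∈ restrict edge E S, x e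

set_option linter.unusedSectionVars false

section Aux

variable [Fintype V] [DecidableEq V] [DecidableEq α]
variable (edge : α → Finset V) (E : Finset α) (x : α → ℝ) (β : ℝ) (r : V)

lemma restrict_univ : _root_.restrict edge E univ = E := by
  simp [_root_.restrict]

lemma fAux_univ : fAux edge E x β r univ = ∑ e ∈ E, x e := by
  simp [fAux, restrict_univ]

lemma fAux_supermod (hx : ∀ e ∈ E, 0 ≤ x e) (S T : Finset V) :
    fAux edge E x β r S + fAux edge E x β r T ≤
      fAux edge E x β r (S ∪ T) + fAux edge E x β r (S ∩ T) := by
  unfold fAux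
  have hβ : ((if r ∈ S then (0:ℝ) else β) + if r ∈ T then 0 else β) =
      (if r ∈ S ∪ T then (0:ℝ) else β) + if r ∈ S ∩ T then 0 else β := by
    by_cases hS : r ∈ S <;> by_cases hT : r ∈ T <;> simp [hS, hT]
  have hsub : _root_.restrict edge E S ∪ _root_.restrict edge E T ⊆
      _root_.restrict edge E (S ∪ T) := by
    intro e he
    rcases Finset.mem_union.1 he with h | h <;>
      simp only [_root_.restrict, mem_filter] at h ⊢ <;>
      exact ⟨h.1, h.2.trans (by simp)⟩
  have hint : _root_.restrict edge E S ∩ _root_.restrict edge E T =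
      _root_.restrict edge E (S ∩ T) := by
    ext e
    simp only [_root_.restrict, mem_inter, mem_filter, Finset.subset_inter_iff]
    tauto
  have h1 : ∑ e ∈ _root_.restrict edge E S, x e + ∑ e ∈ _root_.restrict edge E T, x e =
      ∑ e ∈ _root_.restrict edge E S ∪ _root_.restrict edge E T, x e +
        ∑ e ∈ _root_.restrict edge E (S ∩ T), x e := by
    rw [← hint, Finset.sum_union_inter]
  have h2 : ∑ e ∈ _root_.restrict edge E S ∪ _root_.restrict edge E T, x e ≤
      ∑ e ∈ _root_.restrict edge E (S ∪ T), x e := by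
    apply Finset.sum_le_sum_of_subset_of_nonneg hsub
    intro e he _
    exact hx e (Finset.mem_filter.1 he).1
  linarith

/-- Feasibility predicate for the covering LP. -/
def Feas (y : V → ℝ) : Prop :=
  ∀ S : Finset V, S.Nonempty → fAux edge E x β r S ≤ ∑ v ∈ S, y v

lemma tight_union (hx : ∀ e ∈ E, 0 ≤ x e) {y : V → ℝ} (hy : Feas edge E x β r y)
    {S T : Finset V} (hST : (S ∩ T).Nonempty)
    (hS : ∑ u ∈ S, y u = fAux edge E x β r S) (hT : ∑ u ∈ T, y u = fAux edge E x β r T) :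
    ∑ u ∈ S ∪ T, y u = fAux edge E x β r (S ∪ T) := by
  have h1 := fAux_supermod edge E x β r hx S T
  have h2 := hy (S ∪ T) (hST.mono (Finset.inter_subset_left.trans Finset.subset_union_left))
  have h3 := hy (S ∩ T) hST
  have h4 : ∑ u ∈ S ∪ T, y u + ∑ u ∈ S ∩ T, y u = ∑ u ∈ S, y u + ∑ u ∈ T, y u :=
    Finset.sum_union_inter
  linarith

lemma sum_part (Ps : Finset (Finset V)) (hPs : IsPartition Ps) (g : V → ℝ) :
    ∑ v : V, g v = ∑ P ∈ Ps, ∑ v ∈ P, g v := by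
  have h1 : (univ : Finset V) = Ps.biUnion id := by
    rw [← hPs.2.2, Finset.sup_eq_biUnion]
  rw [h1]
  exact Finset.sum_biUnion (fun P hP Q hQ hne => hPs.2.1 P hP Q hQ hne)

lemma sum_part_beta (Ps : Finset (Finset V)) (hPs : IsPartition Ps) :
    ∑ P ∈ Ps, (if r ∈ P then (0:ℝ) else β) = β * ((Ps.card : ℝ) - 1) := by
  have hr : r ∈ Ps.sup id := hPs.2.2 ▸ Finset.mem_univ r
  rw [Finset.sup_eq_biUnion, Finset.mem_biUnion] at hr
  obtain ⟨P0, hP0, hrP0⟩ := hr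
  simp only [id] at hrP0
  rw [← Finset.sum_erase_add _ _ hP0]
  have h1 : ∀ P ∈ Ps.erase P0, (if r ∈ P then (0:ℝ) else β) = β := by
    intro P hP
    rw [Finset.mem_erase] at hP
    have : r ∉ P := fun hrP =>
      Finset.disjoint_left.1 (hPs.2.1 P hP.2 P0 hP0 hP.1) hrP hrP0
    simp [this]
  rw [Finset.sum_congr rfl h1, if_pos hrP0, Finset.sum_const, Finset.card_erase_of_mem hP0]
  have hc : 1 ≤ Ps.card := Finset.card_pos.2 ⟨P0, hP0⟩
  rw [nsmul_eq_mul, Nat.cast_sub hc]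
  push_cast
  ring

lemma sum_part_x (hE : ∀ e ∈ E, 2 ≤ (edge e).card)
    (Ps : Finset (Finset V)) (hPs : IsPartition Ps) :
    ∑ P ∈ Ps, ∑ e ∈ _root_.restrict edge E P, x e =
      ∑ e ∈ E, x e - ∑ e ∈ delta edge E Ps, x e := by
  classical
  have hsup : Ps.sup id = univ := hPs.2.2
  have hcover : ∀ w : V, ∃ P ∈ Ps, w ∈ P := by
    intro w
    have h : w ∈ Ps.sup id := hsup ▸ Finset.mem_univ w
    rw [Finset.sup_eq_biUnion, Finset.mem_biUnion] at h
    exact h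
  have hkey : E.filter (fun e => ¬ (edge e ⊆ Ps.sup id ∧
      2 ≤ (Ps.filter fun P => (edge e ∩ P).Nonempty).card)) =
      Ps.biUnion (fun P => _root_.restrict edge E P) := by
    ext e
    simp only [Finset.mem_filter, Finset.mem_biUnion, _root_.restrict]
    constructor
    · rintro ⟨heE, hne⟩
      push_neg at hne
      have hcard := hne (hsup ▸ Finset.subset_univ _)
      have hene : (edge e).Nonempty := Finset.card_pos.1 (lt_of_lt_of_le (by norm_num) (hE e heE))
      obtain ⟨w, hw⟩ := hene
      obtain ⟨P, hP, hwP⟩ := hcover w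
      have hPf : P ∈ Ps.filter fun P => (edge e ∩ P).Nonempty :=
        Finset.mem_filter.2 ⟨hP, ⟨w, Finset.mem_inter.2 ⟨hw, hwP⟩⟩⟩
      have hone : (Ps.filter fun P => (edge e ∩ P).Nonempty).card = 1 := by
        have := Finset.card_pos.2 ⟨P, hPf⟩
        omega
      refine ⟨P, hP, heE, ?_⟩
      intro u hu
      obtain ⟨Q, hQ, huQ⟩ := hcover u
      have hQf : Q ∈ Ps.filter fun P => (edge e ∩ P).Nonempty :=
        Finset.mem_filter.2 ⟨hQ, ⟨u, Finset.mem_inter.2 ⟨hu, huQ⟩⟩⟩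
      have hQP : Q = P := by
        rw [Finset.card_eq_one] at hone
        obtain ⟨R, hR⟩ := hone
        rw [hR, Finset.mem_singleton] at hPf hQf
        rw [hQf, hPf]
      exact hQP ▸ huQ
    · rintro ⟨P, hP, he⟩
      refine ⟨he.1, ?_⟩
      rintro ⟨-, hcard⟩
      have hsub : Ps.filter (fun Q => (edge e ∩ Q).Nonempty) ⊆ {P} := by
        intro Q hQ
        rw [Finset.mem_filter] at hQ
        obtain ⟨u, hu⟩ := hQ.2
        rw [Finset.mem_inter] at hu
        rw [Finset.mem_singleton]
        by_contra hne
        exact Finset.disjoint_left.1 (hPs.2.1 Q hQ.1 P hP hne) hu.2 (he.2 hu.1)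
      have := Finset.card_le_card hsub
      simp only [Finset.card_singleton] at this
      omega
  have hdisj : ∀ P ∈ Ps, ∀ Q ∈ Ps, P ≠ Q →
      Disjoint (_root_.restrict edge E P) (_root_.restrict edge E Q) := by
    intro P hP Q hQ hne
    rw [Finset.disjoint_left]
    intro e heP heQ
    simp only [_root_.restrict, Finset.mem_filter] at heP heQ
    have hene : (edge e).Nonempty := Finset.card_pos.1 (lt_of_lt_of_le (by norm_num) (hE e heP.1))
    obtain ⟨w, hw⟩ := hene
    exact Finset.disjoint_left.1 (hPs.2.1 P hP Q hQ hne) (heP.2 hw) (heQ.2 hw)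
  have h2 : ∑ P ∈ Ps, ∑ e ∈ _root_.restrict edge E P, x e =
      ∑ e ∈ Ps.biUnion (fun P => _root_.restrict edge E P), x e :=
    (Finset.sum_biUnion (fun P hP Q hQ hne => hdisj P hP Q hQ hne)).symm
  rw [h2, ← hkey]
  have h3 := Finset.sum_filter_add_sum_filter_not E (fun e => edge e ⊆ Ps.sup id ∧
      2 ≤ (Ps.filter fun P => (edge e ∩ P).Nonempty).card) x
  rw [delta]
  linarith

lemma sum_part_f (hE : ∀ e ∈ E, 2 ≤ (edge e).card)
    (Ps : Finset (Finset V)) (hPs : IsPartition Ps) :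
    ∑ P ∈ Ps, fAux edge E x β r P =
      β * ((Ps.card : ℝ) - 1) + (∑ e ∈ E, x e - ∑ e ∈ delta edge E Ps, x e) := by
  unfold fAux
  rw [Finset.sum_add_distrib, sum_part_beta β r Ps hPs, sum_part_x edge E x hE Ps hPs]

lemma feas_partition_bound (hE : ∀ e ∈ E, 2 ≤ (edge e).card)
    {y : V → ℝ} (hy : Feas edge E x β r y)
    (Ps : Finset (Finset V)) (hPs : IsPartition Ps) :
    β * ((Ps.card : ℝ) - 1) + (∑ e ∈ E, x e - ∑ e ∈ delta edge E Ps, x e) ≤ ∑ v : V, y v := by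
  rw [sum_part Ps hPs y, ← sum_part_f edge E x β r hE Ps hPs]
  exact Finset.sum_le_sum fun P hP => hy P (hPs.1 P hP)

end Aux

section Descent

set_option linter.unusedSectionVars false

variable [Fintype V] [DecidableEq V] [DecidableEq α]
variable (edge : α → Finset V) (E : Finset α) (x : α → ℝ) (β : ℝ) (r : V)

/-- The family of nonempty sets whose constraint is slack at `y`. -/
noncomputable def slackSet (y : V → ℝ) : Finset (Finset V) :=
  @Finset.filter _ (fun S => S.Nonempty ∧ fAux edge E x β r S < ∑ v ∈ S, y v)
    (Classical.decPred _) Finset.univ.powerset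

lemma mem_slackSet (y : V → ℝ) (S : Finset V) :
    S ∈ slackSet edge E x β r y ↔ S.Nonempty ∧ fAux edge E x β r S < ∑ v ∈ S, y v := by
  classical
  rw [slackSet]
  simp [Finset.mem_filter]

lemma descend : ∀ n : ℕ, ∀ y : V → ℝ, Feas edge E x β r y →
    (slackSet edge E x β r y).card ≤ n →
    ∃ y' : V → ℝ, Feas edge E x β r y' ∧ (∑ v : V, y' v ≤ ∑ v : V, y v) ∧
      ∀ v : V, ∃ S : Finset V, v ∈ S ∧ ∑ u ∈ S, y' u = fAux edge E x β r S := by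
  intro n
  induction n with
  | zero =>
    intro y hy hcard
    refine ⟨y, hy, le_refl _, fun v => ⟨{v}, Finset.mem_singleton_self v, ?_⟩⟩
    have hS : ({v} : Finset V) ∉ slackSet edge E x β r y := by
      have h0 : slackSet edge E x β r y = ∅ := Finset.card_eq_zero.1 (Nat.le_zero.1 hcard)
      simp [h0]
    rw [mem_slackSet] at hS
    push_neg at hS
    have h2 := hS ⟨v, Finset.mem_singleton_self v⟩
    have h3 := hy {v} ⟨v, Finset.mem_singleton_self v⟩
    linarith
  | succ n ih =>
    intro y hy hcard
    by_cases hall : ∀ v : V, ∃ S : Finset V, v ∈ S ∧ ∑ u ∈ S, y u = fAux edge E x β r S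
    · exact ⟨y, hy, le_refl _, hall⟩
    · push_neg at hall
      obtain ⟨v, hv⟩ := hall
      set 𝒮 : Finset (Finset V) := Finset.univ.powerset.filter (fun S => v ∈ S) with h𝒮
      have h𝒮ne : 𝒮.Nonempty := ⟨{v}, by simp [h𝒮]⟩
      set g : Finset V → ℝ := fun S => ∑ u ∈ S, y u - fAux edge E x β r S with hg
      set ε := 𝒮.inf' h𝒮ne g with hε
      have hεpos : 0 < ε := by
        rw [hε]
        apply (Finset.lt_inf'_iff h𝒮ne).2
        intro S hS
        have hvS : v ∈ S := (Finset.mem_filter.1 hS).2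
        have hSne : S.Nonempty := ⟨v, hvS⟩
        have h1 := hy S hSne
        have hne := hv S hvS
        have h2 : fAux edge E x β r S < ∑ u ∈ S, y u := lt_of_le_of_ne h1 (Ne.symm hne)
        simp only [hg]
        linarith
      set y' : V → ℝ := fun u => if u = v then y u - ε else y u with hy'
      have hsum_mem : ∀ S : Finset V, v ∈ S → ∑ u ∈ S, y' u = ∑ u ∈ S, y u - ε := by
        intro S hvS
        have hpt : ∀ u ∈ S, y' u = y u - (if u = v then ε else 0) := by
          intro u _
          rw [hy']
          by_cases h : u = v <;> simp [h]
        rw [Finset.sum_congr rfl hpt, Finset.sum_sub_distrib,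
          Finset.sum_ite_eq' S v (fun _ => ε), if_pos hvS]
      have hsum_not : ∀ S : Finset V, v ∉ S → ∑ u ∈ S, y' u = ∑ u ∈ S, y u := by
        intro S hvS
        apply Finset.sum_congr rfl
        intro u hu
        have hne : u ≠ v := fun h => hvS (h ▸ hu)
        rw [hy']
        simp [hne]
      have hy'feas : Feas edge E x β r y' := by
        intro S hSne
        by_cases hvS : v ∈ S
        · rw [hsum_mem S hvS]
          have hS𝒮 : S ∈ 𝒮 := by simp [h𝒮, hvS]
          have h2 := Finset.inf'_le g hS𝒮
          simp only [hg] at h2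
          rw [← hε] at h2
          linarith
        · rw [hsum_not S hvS]
          exact hy S hSne
      obtain ⟨S0, hS0𝒮, hS0⟩ := Finset.exists_mem_eq_inf' h𝒮ne g
      have hvS0 : v ∈ S0 := (Finset.mem_filter.1 hS0𝒮).2
      have hεS0 : ε = ∑ u ∈ S0, y u - fAux edge E x β r S0 := by
        rw [hε, hS0]
      have hS0tight : ∑ u ∈ S0, y' u = fAux edge E x β r S0 := by
        rw [hsum_mem S0 hvS0, hεS0]
        ring
      have hsubset : slackSet edge E x β r y' ⊆ slackSet edge E x β r y := by
        intro S hS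
        rw [mem_slackSet] at hS ⊢
        obtain ⟨hSne, hlt⟩ := hS
        refine ⟨hSne, lt_of_lt_of_le hlt ?_⟩
        by_cases hvS : v ∈ S
        · rw [hsum_mem S hvS]; linarith
        · rw [hsum_not S hvS]
      have hS0y : S0 ∈ slackSet edge E x β r y := by
        rw [mem_slackSet]
        exact ⟨⟨v, hvS0⟩, by linarith⟩
      have hS0y' : S0 ∉ slackSet edge E x β r y' := by
        rw [mem_slackSet]
        rintro ⟨-, hlt⟩
        rw [hS0tight] at hlt
        exact lt_irrefl _ hlt
      have hssub : slackSet edge E x β r y' ⊂ slackSet edge E x β r y :=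
        Finset.ssubset_iff_of_subset hsubset |>.2 ⟨S0, hS0y, hS0y'⟩ |> fun h => h
      have hcard' : (slackSet edge E x β r y').card ≤ n := by
        have := Finset.card_lt_card hssub
        omega
      obtain ⟨y'', h1, h2, h3⟩ := ih y' hy'feas hcard'
      refine ⟨y'', h1, ?_, h3⟩
      have h4 : ∑ u : V, y' u = ∑ u : V, y u - ε := hsum_mem Finset.univ (Finset.mem_univ v)
      linarith

end Descent

section Main

set_option linter.unusedSectionVars false

variable [Fintype V] [DecidableEq V] [DecidableEq α]
variable (edge : α → Finset V) (E : Finset α) (x : α → ℝ) (β : ℝ) (r : V)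

lemma sup_tight (hx : ∀ e ∈ E, 0 ≤ x e) {y : V → ℝ} (hy : Feas edge E x β r y) (v : V) :
    ∀ 𝒮 : Finset (Finset V), 𝒮.Nonempty →
      (∀ S ∈ 𝒮, v ∈ S ∧ ∑ u ∈ S, y u = fAux edge E x β r S) →
      v ∈ 𝒮.sup id ∧ ∑ u ∈ 𝒮.sup id, y u = fAux edge E x β r (𝒮.sup id) := by
  intro 𝒮
  induction 𝒮 using Finset.cons_induction with
  | empty => intro h; exact absurd h (by simp)
  | cons a s ha ih =>
    intro _ h
    rcases s.eq_empty_or_nonempty with hs | hs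
    · subst hs
      have h1 := h a (Finset.mem_cons_self a _)
      simpa using h1
    · have ih' := ih hs (fun S hS => h S (Finset.mem_cons_of_mem hS))
      have ha' := h a (Finset.mem_cons_self a _)
      rw [Finset.sup_cons]
      have hrw : (id a ⊔ s.sup id : Finset V) = a ∪ s.sup id := rfl
      rw [hrw]
      have hint : (a ∩ s.sup id).Nonempty :=
        ⟨v, Finset.mem_inter.2 ⟨ha'.1, ih'.1⟩⟩
      exact ⟨Finset.mem_union_left _ ha'.1,
        tight_union edge E x β r hx hy hint ha'.2 ih'.2⟩

lemma feas_const (hx : ∀ e ∈ E, 0 ≤ x e) (hβ : 0 ≤ β) :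
    Feas edge E x β r (fun _ => β + ∑ e ∈ E, x e) := by
  intro S hSne
  have hxsum : (0:ℝ) ≤ ∑ e ∈ E, x e := Finset.sum_nonneg hx
  have h1 : fAux edge E x β r S ≤ β + ∑ e ∈ E, x e := by
    rw [fAux]
    have h2 : ∑ e ∈ _root_.restrict edge E S, x e ≤ ∑ e ∈ E, x e :=
      Finset.sum_le_sum_of_subset_of_nonneg (Finset.filter_subset _ _)
        (fun e he _ => hx e he)
    split_ifs <;> linarith
  have h2 : β + ∑ e ∈ E, x e ≤ ∑ _v ∈ S, (β + ∑ e ∈ E, x e) := by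
    rw [Finset.sum_const, nsmul_eq_mul]
    have h3 : (1:ℝ) ≤ (S.card : ℝ) := by exact_mod_cast Finset.card_pos.2 hSne
    nlinarith
  exact h1.trans h2

lemma key_exists (hE : ∀ e ∈ E, 2 ≤ (edge e).card)
    (hx : ∀ e ∈ E, 0 ≤ x e) (hβ : 0 ≤ β)
    (hpart : ∀ Ps : Finset (Finset V), IsPartition Ps →
      β * ((Ps.card : ℝ) - 1) ≤ ∑ e ∈ delta edge E Ps, x e) :
    ∃ y : V → ℝ, Feas edge E x β r y ∧ ∑ v : V, y v ≤ ∑ e ∈ E, x e := by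
  classical
  obtain ⟨y, hyfeas, -, htight⟩ := descend edge E x β r
    (slackSet edge E x β r (fun _ => β + ∑ e ∈ E, x e)).card
    (fun _ => β + ∑ e ∈ E, x e) (feas_const edge E x β r hx hβ) le_rfl
  set T : V → Finset V := fun v =>
    (Finset.univ.powerset.filter
      (fun S => v ∈ S ∧ ∑ u ∈ S, y u = fAux edge E x β r S)).sup id with hT
  have hTfam : ∀ v : V, (Finset.univ.powerset.filter
      (fun S => v ∈ S ∧ ∑ u ∈ S, y u = fAux edge E x β r S)).Nonempty := by
    intro v
    obtain ⟨S, hvS, hStight⟩ := htight v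
    exact ⟨S, Finset.mem_filter.2 ⟨Finset.mem_powerset.2 (Finset.subset_univ S), hvS, hStight⟩⟩
  have hTv : ∀ v : V, v ∈ T v ∧ ∑ u ∈ T v, y u = fAux edge E x β r (T v) := by
    intro v
    exact sup_tight edge E x β r hx hyfeas v _ (hTfam v)
      (fun S hS => (Finset.mem_filter.1 hS).2)
  have hTmax : ∀ (v : V) (S : Finset V), v ∈ S →
      ∑ u ∈ S, y u = fAux edge E x β r S → S ⊆ T v := by
    intro v S hvS hSt
    exact Finset.le_sup (f := id)
      (Finset.mem_filter.2 ⟨Finset.mem_powerset.2 (Finset.subset_univ S), hvS, hSt⟩)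
  have hTeq : ∀ u w : V, ¬ Disjoint (T u) (T w) → T u = T w := by
    intro u w hD
    rw [Finset.not_disjoint_iff] at hD
    obtain ⟨z, hzu, hzw⟩ := hD
    have hun : ∑ a ∈ T u ∪ T w, y a = fAux edge E x β r (T u ∪ T w) :=
      tight_union edge E x β r hx hyfeas ⟨z, Finset.mem_inter.2 ⟨hzu, hzw⟩⟩ (hTv u).2 (hTv w).2
    have h1 : T u ∪ T w ⊆ T u := hTmax u _ (Finset.mem_union_left _ (hTv u).1) hun
    have h2 : T u ∪ T w ⊆ T w := hTmax w _ (Finset.mem_union_right _ (hTv w).1) hun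
    exact Finset.Subset.antisymm (Finset.subset_union_left.trans h2)
      (Finset.subset_union_right.trans h1)
  set Ps := Finset.univ.image T with hPsdef
  have hPspart : IsPartition Ps := by
    refine ⟨?_, ?_, ?_⟩
    · intro P hP
      obtain ⟨v, -, rfl⟩ := Finset.mem_image.1 hP
      exact ⟨v, (hTv v).1⟩
    · intro P hP Q hQ hne
      obtain ⟨u, -, rfl⟩ := Finset.mem_image.1 hP
      obtain ⟨w, -, rfl⟩ := Finset.mem_image.1 hQ
      by_contra hD
      exact hne (hTeq u w hD)
    · apply Finset.Subset.antisymm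
      · exact Finset.subset_univ _
      · intro z _
        have hz : z ∈ T z := (hTv z).1
        have hTz : T z ∈ Ps := Finset.mem_image_of_mem T (Finset.mem_univ z)
        have hle : id (T z) ≤ Ps.sup id := Finset.le_sup hTz
        exact hle hz
  have hPtight : ∀ P ∈ Ps, ∑ u ∈ P, y u = fAux edge E x β r P := by
    intro P hP
    obtain ⟨v, -, rfl⟩ := Finset.mem_image.1 hP
    exact (hTv v).2
  refine ⟨y, hyfeas, ?_⟩
  have h1 : ∑ v : V, y v = ∑ P ∈ Ps, fAux edge E x β r P := by
    rw [sum_part Ps hPspart y]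
    exact Finset.sum_congr rfl hPtight
  rw [h1, sum_part_f edge E x β r hE Ps hPspart]
  have h2 := hpart Ps hPspart
  linarith

end Main


/-- the optimum of the covering LP `min y(V)` s.t. `y(S) ≥ f(S)` is always at
least `x̄(E)`, and it equals `x̄(E)` iff all partition inequalities
`x̄(δ(Ps)) ≥ β(|Ps| - 1)` hold. -/
theorem greedy_lp_value [Fintype V] [DecidableEq V] [DecidableEq α]
    (edge : α → Finset V) (E : Finset α)
    (hV : 1 ≤ Fintype.card V) (hE : ∀ e ∈ E, 2 ≤ (edge e).card)
    (x : α → ℝ) (hx : ∀ e ∈ E, 0 ≤ x e) (β : ℝ) (hβ : 0 ≤ β) (r : V) :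
    (∑ e ∈ E, x e) ≤
      sInf {s : ℝ | ∃ y : V → ℝ,
        (∀ S : Finset V, S.Nonempty → fAux edge E x β r S ≤ ∑ v ∈ S, y v) ∧
        s = ∑ v : V, y v} ∧
    (sInf {s : ℝ | ∃ y : V → ℝ,
        (∀ S : Finset V, S.Nonempty → fAux edge E x β r S ≤ ∑ v ∈ S, y v) ∧
        s = ∑ v : V, y v} = ∑ e ∈ E, x e ↔
      ∀ Ps : Finset (Finset V), IsPartition Ps →
        β * ((Ps.card : ℝ) - 1) ≤ ∑ e ∈ delta edge E Ps, x e) := by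
  classical
  set A : Set ℝ := {s : ℝ | ∃ y : V → ℝ,
      (∀ S : Finset V, S.Nonempty → fAux edge E x β r S ≤ ∑ v ∈ S, y v) ∧
      s = ∑ v : V, y v} with hA
  haveI : Nonempty V := Fintype.card_pos_iff.1 hV
  have hAne : A.Nonempty :=
    ⟨∑ v : V, (fun _ => β + ∑ e ∈ E, x e) v,
      (fun _ => β + ∑ e ∈ E, x e), feas_const edge E x β r hx hβ, rfl⟩
  have hlb : ∀ s ∈ A, ∑ e ∈ E, x e ≤ s := by
    rintro s ⟨y, hy, rfl⟩
    have huniv : (Finset.univ : Finset V).Nonempty := Finset.univ_nonempty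
    have h1 := hy Finset.univ huniv
    rwa [fAux_univ] at h1
  have hbdd : BddBelow A := ⟨∑ e ∈ E, x e, hlb⟩
  have h1 : ∑ e ∈ E, x e ≤ sInf A := le_csInf hAne hlb
  refine ⟨h1, ?_, ?_⟩
  · intro heq Ps hPs
    by_contra hlt
    push_neg at hlt
    have h2 : ∀ s ∈ A, β * ((Ps.card : ℝ) - 1) +
        (∑ e ∈ E, x e - ∑ e ∈ delta edge E Ps, x e) ≤ s := by
      rintro s ⟨y, hy, rfl⟩
      exact feas_partition_bound edge E x β r hE hy Ps hPs
    have h3 := le_csInf hAne h2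
    rw [heq] at h3
    linarith
  · intro hpart
    obtain ⟨y, hy, hle⟩ := key_exists edge E x β r hE hx hβ hpart
    have h2 : sInf A ≤ ∑ v : V, y v := csInf_le hbdd ⟨y, hy, rfl⟩
    linarith
end

section
/- Let H = (V, E) be a hypergraph, x̄ ∈ ℝ^E with x̄ ≥ 0, and β ∈ ℝ. Let Φ = {S_1, …, S_p} be a partition of V into nonempty parts minimizing x̄(δ(𝒫)) − β(|𝒫| − 1) over all partitions 𝒫 of V into nonempty parts. Then for every i with 1 ≤ i ≤ p and every partition {T_1, …, T_q} of S_i into nonempty parts, x̄(δ(T_1, …, T_q)) − β(q − 1) ≥ 0. -/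
open Finset

variable {V α : Type*}

/-- Lemma 1: if `Φ` minimizes `x̄(δ(Ps)) - β(|Ps| - 1)` over partitions of `V`,
then for every part `S ∈ Φ` and every partition `T` of `S` into nonempty parts,
`x̄(δ(T)) - β(|T| - 1) ≥ 0`. -/
theorem optimal_partition_refinement [Fintype V] [DecidableEq V] [DecidableEq α]
    (edge : α → Finset V) (E : Finset α)
    (hV : 1 ≤ Fintype.card V) (hE : ∀ e ∈ E, 2 ≤ (edge e).card)
    (x : α → ℝ) (hx : ∀ e ∈ E, 0 ≤ x e) (β : ℝ)
    (Φ : Finset (Finset V)) (hΦ : IsPartition Φ)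
    (hmin : ∀ Ps : Finset (Finset V), IsPartition Ps →
      (∑ e ∈ delta edge E Φ, x e) - β * ((Φ.card : ℝ) - 1) ≤
        (∑ e ∈ delta edge E Ps, x e) - β * ((Ps.card : ℝ) - 1))
    (S : Finset V) (hS : S ∈ Φ)
    (T : Finset (Finset V)) (hT : IsPartitionOf T S) :
    0 ≤ (∑ e ∈ delta edge E T, x e) - β * ((T.card : ℝ) - 1) := by
  obtain ⟨hΦne, hΦdisj, hΦsup⟩ := hΦ
  obtain ⟨hTne, hTdisj, hTsup⟩ := hT
  have hTsub : ∀ P ∈ T, P ⊆ S := fun P hP => hTsup ▸ Finset.le_sup (f := id) hP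
  have hPS_disj : ∀ P ∈ Φ.erase S, Disjoint P S := fun P hP =>
    hΦdisj P (Finset.mem_of_mem_erase hP) S hS (Finset.ne_of_mem_erase hP)
  have hET : Disjoint (Φ.erase S) T := by
    rw [Finset.disjoint_left]
    intro P hPe hPT
    have hd := hPS_disj P hPe
    have hsub := hTsub P hPT
    have hemp : P = ∅ := Finset.eq_empty_of_forall_notMem
      (fun v hv => Finset.disjoint_left.mp hd hv (hsub hv))
    exact (hTne P hPT).ne_empty hemp
  set Ps := Φ.erase S ∪ T with hPsdef
  have hPssup : Ps.sup id = Finset.univ := by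
    have h1 : Ps.sup id = (Φ.erase S).sup id ⊔ T.sup id := Finset.sup_union
    have h2 : Φ.sup id = S ⊔ (Φ.erase S).sup id := by
      conv_lhs => rw [← Finset.insert_erase hS]
      exact Finset.sup_insert
    rw [h1, hTsup, sup_comm, ← h2, hΦsup]
  have hPsPart : IsPartition Ps := by
    refine ⟨?_, ?_, hPssup⟩
    · intro P hP
      rcases Finset.mem_union.mp hP with h | h
      · exact hΦne P (Finset.mem_of_mem_erase h)
      · exact hTne P h
    · intro P hP Q hQ hne
      rcases Finset.mem_union.mp hP with h1 | h1 <;>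
        rcases Finset.mem_union.mp hQ with h2 | h2
      · exact hΦdisj P (Finset.mem_of_mem_erase h1) Q (Finset.mem_of_mem_erase h2) hne
      · exact (hPS_disj P h1).mono_right (hTsub Q h2)
      · exact ((hPS_disj Q h2).mono_right (hTsub P h1)).symm
      · exact hTdisj P h1 Q h2 hne
  have hcardPs : Ps.card = (Φ.erase S).card + T.card := Finset.card_union_of_disjoint hET
  have hcardE : (Φ.erase S).card + 1 = Φ.card := Finset.card_erase_add_one hS
  have hcardR : (Ps.card : ℝ) = (Φ.card : ℝ) - 1 + T.card := by
    rw [hcardPs]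
    push_cast
    have : ((Φ.erase S).card : ℝ) + 1 = Φ.card := by exact_mod_cast hcardE
    linarith
  -- delta inclusion
  have hsubS : ∀ e ∈ delta edge E Ps, e ∉ delta edge E Φ → e ∈ delta edge E T := by
    intro e he hnΦ
    rw [delta, Finset.mem_filter] at he
    obtain ⟨heE, -, hcnt⟩ := he
    have hfilt : Ps.filter (fun P => (edge e ∩ P).Nonempty) =
        (Φ.erase S).filter (fun P => (edge e ∩ P).Nonempty) ∪
        T.filter (fun P => (edge e ∩ P).Nonempty) := Finset.filter_union _ _ _
    have hdisjf : Disjoint ((Φ.erase S).filter (fun P => (edge e ∩ P).Nonempty))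
        (T.filter (fun P => (edge e ∩ P).Nonempty)) :=
      hET.mono (Finset.filter_subset _ _) (Finset.filter_subset _ _)
    have hcnt' : 2 ≤ ((Φ.erase S).filter (fun P => (edge e ∩ P).Nonempty)).card +
        (T.filter (fun P => (edge e ∩ P).Nonempty)).card := by
      rw [hfilt, Finset.card_union_of_disjoint hdisjf] at hcnt; exact hcnt
    -- key: c₁ = 0, i.e. edge e misses all parts of Φ other than S
    have hc1 : ((Φ.erase S).filter (fun P => (edge e ∩ P).Nonempty)).card = 0 := by
      by_contra hc10
      apply hnΦ
      rw [delta, Finset.mem_filter]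
      refine ⟨heE, by simp [hΦsup], ?_⟩
      obtain ⟨P, hPf⟩ := Finset.card_pos.mp (Nat.pos_of_ne_zero hc10)
      rw [Finset.mem_filter] at hPf
      obtain ⟨hPe, hPint⟩ := hPf
      by_cases hc2 : (T.filter (fun P => (edge e ∩ P).Nonempty)).card = 0
      · -- then c₁ ≥ 2: use subset of Φ filter
        have h2 : 2 ≤ ((Φ.erase S).filter (fun P => (edge e ∩ P).Nonempty)).card := by
          omega
        calc 2 ≤ _ := h2
          _ ≤ (Φ.filter (fun P => (edge e ∩ P).Nonempty)).card :=
            Finset.card_le_card (Finset.filter_subset_filter _ (Finset.erase_subset _ _))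
      · -- edge e meets S, so S and P are two distinct parts of Φ meeting e
        obtain ⟨Q, hQf⟩ := Finset.card_pos.mp (Nat.pos_of_ne_zero hc2)
        rw [Finset.mem_filter] at hQf
        have hQS : (edge e ∩ S).Nonempty := by
          obtain ⟨v, hv⟩ := hQf.2
          exact ⟨v, Finset.mem_inter.mpr ⟨(Finset.mem_inter.mp hv).1,
            hTsub Q hQf.1 (Finset.mem_inter.mp hv).2⟩⟩
        refine Finset.one_lt_card.mpr ⟨S, Finset.mem_filter.mpr ⟨hS, hQS⟩, P,
          Finset.mem_filter.mpr ⟨Finset.mem_of_mem_erase hPe, hPint⟩,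
          (Finset.ne_of_mem_erase hPe).symm⟩
    rw [delta, Finset.mem_filter]
    refine ⟨heE, ?_, ?_⟩
    · -- edge e ⊆ S
      rw [hTsup]
      intro v hv
      have hvuniv : v ∈ Φ.sup id := by rw [hΦsup]; exact Finset.mem_univ v
      obtain ⟨P, hPΦ, hvP⟩ := Finset.mem_sup.mp hvuniv
      by_cases hPS : P = S
      · exact hPS ▸ hvP
      · exfalso
        have : P ∈ (Φ.erase S).filter (fun P => (edge e ∩ P).Nonempty) :=
          Finset.mem_filter.mpr ⟨Finset.mem_erase.mpr ⟨hPS, hPΦ⟩,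
            ⟨v, Finset.mem_inter.mpr ⟨hv, hvP⟩⟩⟩
        rw [Finset.card_eq_zero.mp hc1] at this
        exact absurd this (Finset.notMem_empty P)
    · omega
  -- disjointness of δ(Φ) and δ(T)
  have hdisjδ : Disjoint (delta edge E Φ) (delta edge E T) := by
    rw [Finset.disjoint_left]
    intro e heΦ heT
    rw [delta, Finset.mem_filter] at heΦ heT
    obtain ⟨-, heS, -⟩ := heT
    rw [hTsup] at heS
    obtain ⟨-, -, hcnt⟩ := heΦ
    have hsub1 : Φ.filter (fun P => (edge e ∩ P).Nonempty) ⊆ {S} := by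
      intro P hP
      rw [Finset.mem_filter] at hP
      obtain ⟨hPΦ, hPint⟩ := hP
      rw [Finset.mem_singleton]
      by_contra hne
      have hd := hΦdisj P hPΦ S hS hne
      obtain ⟨v, hv⟩ := hPint
      rw [Finset.mem_inter] at hv
      exact Finset.disjoint_left.mp hd hv.2 (heS hv.1)
    have := Finset.card_le_card hsub1
    simp at this
    omega
  -- sum comparison
  have hsumle : ∑ e ∈ delta edge E Ps, x e ≤
      ∑ e ∈ delta edge E Φ, x e + ∑ e ∈ delta edge E T, x e := by
    rw [← Finset.sum_union hdisjδ]
    apply Finset.sum_le_sum_of_subset_of_nonneg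
    · intro e he
      rw [Finset.mem_union]
      by_cases h : e ∈ delta edge E Φ
      · exact Or.inl h
      · exact Or.inr (hsubS e he h)
    · intro e he _
      rcases Finset.mem_union.mp he with h | h <;>
        exact hx e (Finset.mem_of_mem_filter e h)
  have := hmin Ps hPsPart
  rw [hcardR] at this
  linarith
end

section
/- Let H = (V, E) be a hypergraph, x̄ ∈ ℝ^E with x̄ ≥ 0, and β ∈ ℝ. Let Φ = {S_1, …, S_p} be a partition of V into nonempty parts minimizing x̄(δ(𝒫)) − β(|𝒫| − 1) over all partitions 𝒫 of V into nonempty parts. Then for every nonempty subfamily {S_{i_1}, …, S_{i_l}} of Φ, x̄(δ(S_{i_1}, …, S_{i_l})) − β(l − 1) ≤ 0. -/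
/-! Merging the parts of `Φ'` into the single part `⋃ Φ'` turns `Φ` into a partition `Ψ` with
`|Φ| - |Φ'| + 1` parts. A hyperedge crosses `Φ` exactly when it crosses `Ψ` or lies inside `⋃ Φ'`
and crosses `Φ'`, and never both, so `x̄(δ(Φ)) = x̄(δ(Ψ)) + x̄(δ(Φ'))`. The objective of `Ψ` is
therefore that of `Φ` minus `x̄(δ(Φ')) - β(|Φ'| - 1)`, and minimality of `Φ` makes this `≤ 0`. -/

open Finset

variable {V α : Type*}

def mergeParts [DecidableEq V] (Ps Qs : Finset (Finset V)) : Finset (Finset V) :=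
  insert (Qs.sup id) (Ps \ Qs)

def partsMeeting [DecidableEq V] (Ps : Finset (Finset V)) (X : Finset V) : Finset (Finset V) :=
  Ps.filter fun P => (X ∩ P).Nonempty

section
variable [DecidableEq V] {Ps Qs : Finset (Finset V)} {S X : Finset V}

lemma mem_delta_iff {edge : α → Finset V} {F : Finset α} {e : α} :
    e ∈ delta edge F Ps ↔ e ∈ F ∧ edge e ⊆ Ps.sup id ∧ 2 ≤ #(partsMeeting Ps (edge e)) :=
  mem_filter

lemma card_partsMeeting_of_subset (hQ : Qs ⊆ Ps) (X : Finset V) :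
    #(partsMeeting Ps X) = #(partsMeeting (Ps \ Qs) X) + #(partsMeeting Qs X) := by
  rw [partsMeeting, partsMeeting, partsMeeting,
    ← card_union_of_disjoint (disjoint_filter_filter sdiff_disjoint), ← filter_union,
    sdiff_union_of_subset hQ]

lemma inter_sup_nonempty_iff : (X ∩ Qs.sup id).Nonempty ↔ (partsMeeting Qs X).Nonempty := by
  simp only [Finset.Nonempty, partsMeeting, mem_filter, mem_inter, mem_sup, id]
  grind

namespace IsPartitionOf

lemma disjoint_sup_of_mem_sdiff (h : IsPartitionOf Ps S) (hQ : Qs ⊆ Ps) {P : Finset V}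
    (hP : P ∈ Ps \ Qs) : Disjoint P (Qs.sup id) := by
  rw [mem_sdiff] at hP
  refine Finset.disjoint_sup_right.mpr fun Q hQs => h.2.1 P hP.1 Q (hQ hQs) ?_
  rintro rfl
  exact hP.2 hQs

lemma sup_nonempty (h : IsPartitionOf Ps S) (hQ : Qs ⊆ Ps) (hne : Qs.Nonempty) :
    (Qs.sup id).Nonempty :=
  let ⟨Q, hQs⟩ := hne
  (h.1 Q (hQ hQs)).mono (le_sup (f := id) hQs)

lemma sup_notMem_sdiff (h : IsPartitionOf Ps S) (hQ : Qs ⊆ Ps) (hne : Qs.Nonempty) :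
    Qs.sup id ∉ Ps \ Qs := fun hmem =>
  (h.sup_nonempty hQ hne).ne_empty (disjoint_self.mp (h.disjoint_sup_of_mem_sdiff hQ hmem))

lemma mergeParts (h : IsPartitionOf Ps S) (hQ : Qs ⊆ Ps) (hne : Qs.Nonempty) :
    IsPartitionOf (mergeParts Ps Qs) S := by
  refine ⟨?_, ?_, ?_⟩
  · simp only [_root_.mergeParts, mem_insert, forall_eq_or_imp]
    exact ⟨h.sup_nonempty hQ hne, fun P hP => h.1 P (mem_sdiff.mp hP).1⟩
  · simp only [_root_.mergeParts, mem_insert, forall_eq_or_imp]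
    refine ⟨⟨fun hTT => absurd rfl hTT,
        fun Q hQ' _ => (h.disjoint_sup_of_mem_sdiff hQ hQ').symm⟩,
      fun P hP => ⟨fun _ => h.disjoint_sup_of_mem_sdiff hQ hP,
        fun Q hQ' => h.2.1 P (mem_sdiff.mp hP).1 Q (mem_sdiff.mp hQ').1⟩⟩
  · rw [_root_.mergeParts, sup_insert, id, ← sup_union, union_sdiff_of_subset hQ, h.2.2]

lemma card_mergeParts (h : IsPartitionOf Ps S) (hQ : Qs ⊆ Ps) (hne : Qs.Nonempty) :
    #(_root_.mergeParts Ps Qs) + #Qs = #Ps + 1 := by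
  rw [_root_.mergeParts, card_insert_of_notMem (h.sup_notMem_sdiff hQ hne),
    card_sdiff_of_subset hQ]
  have := card_le_card hQ
  omega

lemma card_partsMeeting_mergeParts (h : IsPartitionOf Ps S) (hQ : Qs ⊆ Ps) (hne : Qs.Nonempty)
    (X : Finset V) :
    #(partsMeeting (_root_.mergeParts Ps Qs) X) =
      #(partsMeeting (Ps \ Qs) X) + if (partsMeeting Qs X).Nonempty then 1 else 0 := by
  rw [partsMeeting, _root_.mergeParts, filter_insert]
  by_cases hm : (partsMeeting Qs X).Nonempty
  · rw [if_pos (inter_sup_nonempty_iff.mpr hm), if_pos hm,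
      card_insert_of_notMem fun hmem => h.sup_notMem_sdiff hQ hne (mem_filter.mp hmem).1]
    rfl
  · rw [if_neg (mt inter_sup_nonempty_iff.mp hm), if_neg hm]
    rfl

lemma subset_sup_iff (h : IsPartitionOf Ps S) (hQ : Qs ⊆ Ps) (hX : X ⊆ S) :
    X ⊆ Qs.sup id ↔ partsMeeting (Ps \ Qs) X = ∅ := by
  rw [partsMeeting, filter_eq_empty_iff]
  constructor
  · rintro hXQ P hP ⟨v, hv⟩
    rw [mem_inter] at hv
    exact disjoint_left.mp (h.disjoint_sup_of_mem_sdiff hQ hP) hv.2 (hXQ hv.1)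
  · intro hempty v hv
    obtain ⟨P, hP, hvP⟩ := mem_sup.mp (h.2.2 ▸ hX hv : v ∈ Ps.sup id)
    by_contra hvQ
    refine hempty (mem_sdiff.mpr ⟨hP, fun hPQ => hvQ (mem_sup.mpr ⟨P, hPQ, hvP⟩)⟩)
      ⟨v, mem_inter.mpr ⟨hv, hvP⟩⟩

lemma delta_eq_union [DecidableEq α] (h : IsPartitionOf Ps S) (hQ : Qs ⊆ Ps)
    (hne : Qs.Nonempty) (edge : α → Finset V) (F : Finset α) :
    delta edge F Ps = delta edge F (_root_.mergeParts Ps Qs) ∪ delta edge F Qs := by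
  ext e
  simp only [mem_union, mem_delta_iff, (h.mergeParts hQ hne).2.2, h.2.2,
    card_partsMeeting_of_subset hQ, h.card_partsMeeting_mergeParts hQ hne]
  by_cases hX : edge e ⊆ S
  · simp only [h.subset_sup_iff hQ hX, ← card_eq_zero, ← card_pos]
    -- with `b` parts met outside `⋃ Qs` and `a` inside: `2 ≤ b + a ↔ 2 ≤ b + min a 1 ∨ (b = 0 ∧ 2 ≤ a)`
    split_ifs <;> grind
  · have hXQ : ¬ edge e ⊆ Qs.sup id := fun hXQ => hX (hXQ.trans (h.2.2 ▸ sup_mono hQ))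
    simp only [hX, hXQ, false_and, and_false, or_self]

lemma disjoint_delta_mergeParts (h : IsPartitionOf Ps S) (hQ : Qs ⊆ Ps) (hne : Qs.Nonempty)
    (edge : α → Finset V) (F : Finset α) :
    Disjoint (delta edge F (_root_.mergeParts Ps Qs)) (delta edge F Qs) := by
  refine disjoint_left.mpr fun e hM hQe => ?_
  rw [mem_delta_iff, (h.mergeParts hQ hne).2.2, h.card_partsMeeting_mergeParts hQ hne] at hM
  rw [mem_delta_iff, h.subset_sup_iff hQ hM.2.1] at hQe
  have hcount := hM.2.2
  rw [hQe.2.1, card_empty] at hcount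
  split_ifs at hcount <;> omega

lemma sum_delta_eq (h : IsPartitionOf Ps S) (hQ : Qs ⊆ Ps) (hne : Qs.Nonempty)
    (edge : α → Finset V) (F : Finset α) (x : α → ℝ) :
    ∑ e ∈ delta edge F Ps, x e =
      ∑ e ∈ delta edge F (_root_.mergeParts Ps Qs), x e + ∑ e ∈ delta edge F Qs, x e := by
  classical
  rw [h.delta_eq_union hQ hne, sum_union (h.disjoint_delta_mergeParts hQ hne edge F)]

end IsPartitionOf

end

theorem optimal_partition_subfamily_general [Fintype V] [DecidableEq V]
    (edge : α → Finset V) (E : Finset α)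
    (x : α → ℝ) (β : ℝ)
    (Φ : Finset (Finset V)) (hΦ : IsPartition Φ)
    (hmin : ∀ Ps : Finset (Finset V), IsPartition Ps →
      (∑ e ∈ delta edge E Φ, x e) - β * ((Φ.card : ℝ) - 1) ≤
        (∑ e ∈ delta edge E Ps, x e) - β * ((Ps.card : ℝ) - 1))
    (Φ' : Finset (Finset V)) (hsub : Φ' ⊆ Φ) (hne : Φ'.Nonempty) :
    (∑ e ∈ delta edge E Φ', x e) - β * ((Φ'.card : ℝ) - 1) ≤ 0 := by
  have hmerge := hmin _ (hΦ.mergeParts hsub hne)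
  have hcard : (#(mergeParts Φ Φ') : ℝ) + #Φ' = #Φ + 1 := by
    exact_mod_cast hΦ.card_mergeParts hsub hne
  rw [hΦ.sum_delta_eq hsub hne] at hmerge
  linear_combination hmerge - β * hcard

/-- Lemma 2: if `Φ` minimizes `x̄(δ(Ps)) - β(|Ps| - 1)` over partitions of `V`,
then for every nonempty subfamily `Φ' ⊆ Φ`, `x̄(δ(Φ')) - β(|Φ'| - 1) ≤ 0`. -/
theorem optimal_partition_subfamily [Fintype V] [DecidableEq V] [DecidableEq α]
    (edge : α → Finset V) (E : Finset α)
    (hV : 1 ≤ Fintype.card V) (hE : ∀ e ∈ E, 2 ≤ (edge e).card)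
    (x : α → ℝ) (hx : ∀ e ∈ E, 0 ≤ x e) (β : ℝ)
    (Φ : Finset (Finset V)) (hΦ : IsPartition Φ)
    (hmin : ∀ Ps : Finset (Finset V), IsPartition Ps →
      (∑ e ∈ delta edge E Φ, x e) - β * ((Φ.card : ℝ) - 1) ≤
        (∑ e ∈ delta edge E Ps, x e) - β * ((Ps.card : ℝ) - 1))
    (Φ' : Finset (Finset V)) (hsub : Φ' ⊆ Φ) (hne : Φ'.Nonempty) :
    (∑ e ∈ delta edge E Φ', x e) - β * ((Φ'.card : ℝ) - 1) ≤ 0 :=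
  optimal_partition_subfamily_general edge E x β Φ hΦ hmin Φ' hsub hne
end

section
/- Let H = (V, E) be a hypergraph, x̄ ∈ ℝ^E with x̄ ≥ 0, and β ∈ ℝ. Let Φ = {S_1, …, S_p} be a partition of V into nonempty parts minimizing x̄(δ_H(𝒫)) − β(|𝒫| − 1) over all partitions 𝒫 of V into nonempty parts. Let H' = (V, E ∪ {e₀}) be obtained from H by adding one new hyperedge e₀ ⊆ V with |e₀| ≥ 2, with any value x̄(e₀) ≥ 0, and suppose e₀ is not contained in any single S_i. Then there exists a partition Φ' of V minimizing x̄(δ_{H'}(𝒫)) − β(|𝒫| − 1) over all partitions 𝒫 of V into nonempty parts such that either Φ' = Φ, or Φ' = (Φ \ {S_i : i ∈ I}) ∪ {⋃_{i∈I} S_i} for some index set I ⊆ {1, …, p} with |I| ≥ 2 and e₀ ⊆ ⋃_{i∈I} S_i. -/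
set_option linter.unusedSectionVars false
set_option maxHeartbeats 1000000

open Finset

variable {V α : Type*}

section Aux
variable [Fintype V] [DecidableEq V] [DecidableEq α]

lemma part_eq {Ps : Finset (Finset V)} (hPs : IsPartition Ps)
    {P Q : Finset V} (hP : P ∈ Ps) (hQ : Q ∈ Ps) {v : V} (hvP : v ∈ P) (hvQ : v ∈ Q) :
    P = Q := by
  by_contra h
  exact Finset.disjoint_left.mp (hPs.2.1 P hP Q hQ h) hvP hvQ

lemma exists_part {Ps : Finset (Finset V)} (hPs : IsPartition Ps) (v : V) :
    ∃ P ∈ Ps, v ∈ P := by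
  have hv : v ∈ Ps.sup id := by rw [hPs.2.2]; exact mem_univ v
  simpa using Finset.mem_sup.mp hv

lemma filter_eq_singleton_of_subset {Ps : Finset (Finset V)} (hPs : IsPartition Ps)
    {T A : Finset V} (hT : T ∈ Ps) (hA : A.Nonempty) (hAT : A ⊆ T) :
    (Ps.filter fun P => (A ∩ P).Nonempty) = {T} := by
  ext P
  simp only [mem_filter, mem_singleton]
  constructor
  · rintro ⟨hP, v, hv⟩
    rw [mem_inter] at hv
    exact part_eq hPs hP hT hv.2 (hAT hv.1)
  · rintro rfl
    obtain ⟨v, hv⟩ := hA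
    exact ⟨hT, v, mem_inter.mpr ⟨hv, hAT hv⟩⟩

lemma two_le_of_no_part {Ps : Finset (Finset V)} (hPs : IsPartition Ps)
    {A : Finset V} (hA : A.Nonempty) (h : ∀ P ∈ Ps, ¬ A ⊆ P) :
    2 ≤ (Ps.filter fun P => (A ∩ P).Nonempty).card := by
  obtain ⟨v, hv⟩ := hA
  obtain ⟨P, hP, hvP⟩ := exists_part hPs v
  obtain ⟨w, hw, hwP⟩ := Finset.not_subset.mp (h P hP)
  obtain ⟨Q, hQ, hwQ⟩ := exists_part hPs w
  refine Finset.one_lt_card.mpr ⟨P, ?_, Q, ?_, ?_⟩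
  · exact mem_filter.mpr ⟨hP, v, mem_inter.mpr ⟨hv, hvP⟩⟩
  · exact mem_filter.mpr ⟨hQ, w, mem_inter.mpr ⟨hw, hwQ⟩⟩
  · rintro rfl; exact hwP hwQ

lemma subset_of_cnt_le_one {Ps : Finset (Finset V)} (hPs : IsPartition Ps)
    {T A : Finset V} (hT : T ∈ Ps) (hTA : (A ∩ T).Nonempty)
    (h : (Ps.filter fun P => (A ∩ P).Nonempty).card ≤ 1) :
    A ⊆ T := by
  intro v hv
  obtain ⟨P, hP, hvP⟩ := exists_part hPs v
  have hPf : P ∈ Ps.filter fun P => (A ∩ P).Nonempty :=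
    mem_filter.mpr ⟨hP, v, mem_inter.mpr ⟨hv, hvP⟩⟩
  have hTf : T ∈ Ps.filter fun P => (A ∩ P).Nonempty := mem_filter.mpr ⟨hT, hTA⟩
  have := Finset.card_le_one.mp h P hPf T hTf
  rwa [← this]

lemma delta_of_partition (edge : α → Finset V) (F : Finset α) {Ps : Finset (Finset V)}
    (hsup : Ps.sup id = Finset.univ) :
    delta edge F Ps = F.filter fun e =>
      2 ≤ (Ps.filter fun P => (edge e ∩ P).Nonempty).card := by
  unfold delta
  simp only [hsup, Finset.subset_univ, true_and]

lemma sum_delta_insert (edge : α → Finset V) (E : Finset α) (x : α → ℝ)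
    {Ps : Finset (Finset V)} (hsup : Ps.sup id = Finset.univ)
    {e₀ : α} (he₀ : e₀ ∉ E) :
    ∑ e ∈ delta edge (insert e₀ E) Ps, x e =
      (∑ e ∈ delta edge E Ps, x e) +
        (if 2 ≤ (Ps.filter fun P => (edge e₀ ∩ P).Nonempty).card then x e₀ else 0) := by
  unfold delta
  rw [Finset.filter_insert]
  split_ifs with h1 h2 h3
  · rw [Finset.sum_insert (fun hc => he₀ (Finset.mem_of_mem_filter _ hc))]
    ring
  · exact absurd h1.2 h2
  · exact absurd ⟨by rw [hsup]; exact Finset.subset_univ _, h3⟩ h1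
  · ring

lemma ite_ineq {c : ℝ} (hc : 0 ≤ c) (a s f p : Prop)
    [Decidable a] [Decidable s] [Decidable f] [Decidable p]
    (haf : a → f) (hsp : s → ¬p → f ∧ ¬a) :
    (if a then c else 0) + (if s then c else 0) ≤
      (if f then c else 0) + (if p then c else 0) := by
  have h1 : (if a then c else 0) ≤ (if f then c else 0) := by
    split_ifs with h h'
    · exact le_refl c
    · exact absurd (haf h) h'
    · exact hc
    · exact le_refl 0
  by_cases hp : p
  · rw [if_pos hp]
    have h2 : (if s then c else 0) ≤ c := by split_ifs; exacts [le_refl c, hc]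
    exact add_le_add h1 h2
  · rw [if_neg hp]
    by_cases hs : s
    · obtain ⟨hf, hna⟩ := hsp hs hp
      rw [if_pos hs, if_pos hf, if_neg hna]
      linarith
    · rw [if_neg hs]
      linarith

end Aux
/-- Lemma 3(ii): if `Φ` minimizes `x̄(δ_H(Ps)) - β(|Ps| - 1)` over partitions
of `V` and a new hyperedge `e₀` is not contained in any single part of `Φ`, then in
`H' = (V, E ∪ {e₀})` there is an optimal partition `Φ'` that is either `Φ` itself or is
obtained from `Φ` by merging the parts of a subfamily `I ⊆ Φ`, `|I| ≥ 2`, whose union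
contains `e₀`. -/
theorem optimal_partition_add_edge_across [Fintype V] [DecidableEq V] [DecidableEq α]
    (edge : α → Finset V) (E : Finset α)
    (hV : 1 ≤ Fintype.card V) (hE : ∀ e ∈ E, 2 ≤ (edge e).card)
    (x : α → ℝ) (hx : ∀ e ∈ E, 0 ≤ x e) (β : ℝ)
    (Φ : Finset (Finset V)) (hΦ : IsPartition Φ)
    (hmin : ∀ Ps : Finset (Finset V), IsPartition Ps →
      (∑ e ∈ delta edge E Φ, x e) - β * ((Φ.card : ℝ) - 1) ≤
        (∑ e ∈ delta edge E Ps, x e) - β * ((Ps.card : ℝ) - 1))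
    (e₀ : α) (he₀ : e₀ ∉ E) (he₀2 : 2 ≤ (edge e₀).card) (hx₀ : 0 ≤ x e₀)
    (houtside : ∀ S ∈ Φ, ¬ edge e₀ ⊆ S) :
    ∃ Φ' : Finset (Finset V), IsPartition Φ' ∧
      (∀ Ps : Finset (Finset V), IsPartition Ps →
        (∑ e ∈ delta edge (insert e₀ E) Φ', x e) - β * ((Φ'.card : ℝ) - 1) ≤
          (∑ e ∈ delta edge (insert e₀ E) Ps, x e) - β * ((Ps.card : ℝ) - 1)) ∧
      (Φ' = Φ ∨ ∃ I : Finset (Finset V), I ⊆ Φ ∧ 2 ≤ I.card ∧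
        edge e₀ ⊆ I.sup id ∧ Φ' = insert (I.sup id) (Φ \ I)) := by
  classical
  have he₀ne : (edge e₀).Nonempty := Finset.card_pos.mp (by omega)
  obtain ⟨Ψ, hΨmem, hΨmin⟩ := Finset.exists_min_image
    ((Finset.univ : Finset (Finset (Finset V))).filter fun Ps => IsPartition Ps)
    (fun Ps => (∑ e ∈ delta edge (insert e₀ E) Ps, x e) - β * ((Ps.card : ℝ) - 1))
    ⟨Φ, Finset.mem_filter.mpr ⟨Finset.mem_univ _, hΦ⟩⟩
  have hΨ : IsPartition Ψ := (Finset.mem_filter.mp hΨmem).2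
  have hΨmin' : ∀ Ps : Finset (Finset V), IsPartition Ps →
      (∑ e ∈ delta edge (insert e₀ E) Ψ, x e) - β * ((Ψ.card : ℝ) - 1) ≤
        (∑ e ∈ delta edge (insert e₀ E) Ps, x e) - β * ((Ps.card : ℝ) - 1) :=
    fun Ps hPs => hΨmin Ps (Finset.mem_filter.mpr ⟨Finset.mem_univ _, hPs⟩)
  by_cases hcase : ∃ T ∈ Ψ, edge e₀ ⊆ T
  · -- e₀ inside a part T of Ψ : merge the parts of Φ meeting T
    obtain ⟨T, hT, he₀T⟩ := hcase
    set I : Finset (Finset V) := Φ.filter (fun S => (S ∩ T).Nonempty) with hIdef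
    set U : Finset V := I.sup id with hUdef
    have hIΦ : I ⊆ Φ := Finset.filter_subset _ _
    have hTU : T ⊆ U := by
      intro v hv
      obtain ⟨S, hS, hvS⟩ := exists_part hΦ v
      have hSI : S ∈ I := Finset.mem_filter.mpr ⟨hS, v, Finset.mem_inter.mpr ⟨hvS, hv⟩⟩
      exact (Finset.le_sup (f := id) hSI : S ⊆ U) hvS
    have he₀U : edge e₀ ⊆ U := he₀T.trans hTU
    have hmemU : ∀ v ∈ U, ∃ S ∈ I, v ∈ S := by
      intro v hv
      simpa using Finset.mem_sup.mp hv
    have hUdisj : ∀ P ∈ Φ \ I, Disjoint P U := by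
      intro P hP
      rw [Finset.mem_sdiff] at hP
      rw [Finset.disjoint_left]
      intro v hvP hvU
      obtain ⟨S, hSI, hvS⟩ := hmemU v hvU
      have hPS : P ≠ S := fun h => hP.2 (h ▸ hSI)
      exact Finset.disjoint_left.mp (hΦ.2.1 P hP.1 S (hIΦ hSI) hPS) hvP hvS
    have hTne : T.Nonempty := hΨ.1 T hT
    have hUne : U.Nonempty := by
      obtain ⟨v, hv⟩ := hTne; exact ⟨v, hTU hv⟩
    have hUnot : U ∉ Φ \ I := by
      intro h
      obtain ⟨v, hv⟩ := hUne
      exact Finset.disjoint_left.mp (hUdisj U h) hv hv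
    set Φ' : Finset (Finset V) := insert U (Φ \ I) with hΦ'def
    have hUΦ' : U ∈ Φ' := Finset.mem_insert_self _ _
    have hΦ'p : IsPartition Φ' := by
      refine ⟨?_, ?_, ?_⟩
      · intro P hP
        rcases Finset.mem_insert.mp hP with rfl | hP
        · exact hUne
        · exact hΦ.1 P (Finset.mem_sdiff.mp hP).1
      · intro P hP Q hQ hPQ
        rcases Finset.mem_insert.mp hP with rfl | hP' <;>
          rcases Finset.mem_insert.mp hQ with rfl | hQ'
        · exact absurd rfl hPQ
        · exact (hUdisj Q hQ').symm
        · exact hUdisj P hP'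
        · exact hΦ.2.1 P (Finset.mem_sdiff.mp hP').1 Q (Finset.mem_sdiff.mp hQ').1 hPQ
      · apply Finset.Subset.antisymm (Finset.subset_univ _)
        intro v _
        obtain ⟨S, hS, hvS⟩ := exists_part hΦ v
        by_cases hSI : S ∈ I
        · exact Finset.mem_sup.mpr ⟨U, hUΦ', (Finset.le_sup (f := id) hSI : S ⊆ U) hvS⟩
        · exact Finset.mem_sup.mpr
            ⟨S, Finset.mem_insert_of_mem (Finset.mem_sdiff.mpr ⟨hS, hSI⟩), hvS⟩
    have hcardΦ' : Φ'.card + I.card = Φ.card + 1 := by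
      rw [hΦ'def, Finset.card_insert_of_notMem hUnot]
      have := Finset.card_sdiff_add_card_eq_card hIΦ
      omega
    -- the refinement Sg of Ψ splitting T along Φ
    set Sg : Finset (Finset V) := (Ψ.erase T) ∪ I.image (fun S => T ∩ S) with hSgdef
    have hpiece_ne : ∀ S ∈ I, (T ∩ S).Nonempty := by
      intro S hS
      obtain ⟨v, hv⟩ := (Finset.mem_filter.mp hS).2
      rw [Finset.mem_inter] at hv
      exact ⟨v, Finset.mem_inter.mpr ⟨hv.2, hv.1⟩⟩
    have hInj : Set.InjOn (fun S => T ∩ S) I := by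
      intro S₁ h₁ S₂ h₂ h
      by_contra hne
      obtain ⟨v, hv⟩ := hpiece_ne S₁ h₁
      have hv₂ : v ∈ T ∩ S₂ := (show T ∩ S₁ = T ∩ S₂ from h) ▸ hv
      exact Finset.disjoint_left.mp (hΦ.2.1 S₁ (hIΦ h₁) S₂ (hIΦ h₂) hne)
        (Finset.mem_inter.mp hv).2 (Finset.mem_inter.mp hv₂).2
    have hdisjTS : ∀ C ∈ Ψ.erase T, ∀ S ∈ I, Disjoint C (T ∩ S) := by
      intro C hC S hS
      have h1 : Disjoint C T :=
        hΨ.2.1 C (Finset.mem_of_mem_erase hC) T hT (Finset.ne_of_mem_erase hC)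
      exact h1.mono_right Finset.inter_subset_left
    have hdisjU2 : Disjoint (Ψ.erase T) (I.image fun S => T ∩ S) := by
      rw [Finset.disjoint_left]
      intro C hC hC'
      obtain ⟨S, hS, rfl⟩ := Finset.mem_image.mp hC'
      exact absurd (disjoint_self.mp (hdisjTS _ hC S hS)) (hpiece_ne S hS).ne_empty
    have hcardSg : Sg.card + 1 = Ψ.card + I.card := by
      rw [hSgdef, Finset.card_union_of_disjoint hdisjU2, Finset.card_image_of_injOn hInj,
        Finset.card_erase_of_mem hT]
      have : 1 ≤ Ψ.card := Finset.card_pos.mpr ⟨T, hT⟩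
      omega
    have hSgp : IsPartition Sg := by
      refine ⟨?_, ?_, ?_⟩
      · intro C hC
        rcases Finset.mem_union.mp hC with hC | hC
        · exact hΨ.1 C (Finset.mem_of_mem_erase hC)
        · obtain ⟨S, hS, rfl⟩ := Finset.mem_image.mp hC
          exact hpiece_ne S hS
      · intro C hC D hD hCD
        rcases Finset.mem_union.mp hC with hC' | hC' <;>
          rcases Finset.mem_union.mp hD with hD' | hD'
        · exact hΨ.2.1 C (Finset.mem_of_mem_erase hC') D (Finset.mem_of_mem_erase hD') hCD
        · obtain ⟨S, hS, rfl⟩ := Finset.mem_image.mp hD'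
          exact hdisjTS C hC' S hS
        · obtain ⟨S, hS, rfl⟩ := Finset.mem_image.mp hC'
          exact (hdisjTS D hD' S hS).symm
        · obtain ⟨S₁, hS₁, rfl⟩ := Finset.mem_image.mp hC'
          obtain ⟨S₂, hS₂, rfl⟩ := Finset.mem_image.mp hD'
          have hne : S₁ ≠ S₂ := fun h => hCD (by rw [h])
          exact (hΦ.2.1 S₁ (hIΦ hS₁) S₂ (hIΦ hS₂) hne).mono
            Finset.inter_subset_right Finset.inter_subset_right
      · apply Finset.Subset.antisymm (Finset.subset_univ _)
        intro v _
        obtain ⟨Q, hQ, hvQ⟩ := exists_part hΨ v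
        by_cases hQT : Q = T
        · subst hQT
          obtain ⟨S, hS, hvS⟩ := exists_part hΦ v
          have hSI : S ∈ I := Finset.mem_filter.mpr ⟨hS, v, Finset.mem_inter.mpr ⟨hvS, hvQ⟩⟩
          exact Finset.mem_sup.mpr ⟨Q ∩ S,
            Finset.mem_union_right _ (Finset.mem_image_of_mem _ hSI),
            Finset.mem_inter.mpr ⟨hvQ, hvS⟩⟩
        · exact Finset.mem_sup.mpr
            ⟨Q, Finset.mem_union_left _ (Finset.mem_erase.mpr ⟨hQT, hQ⟩), hvQ⟩
    -- crossing facts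
    have hgetS : ∀ {A : Finset V}, (A ∩ U).Nonempty → ∃ S ∈ I, (A ∩ S).Nonempty := by
      rintro A ⟨v, hv⟩
      rw [Finset.mem_inter] at hv
      obtain ⟨S, hS, hvS⟩ := hmemU v hv.2
      exact ⟨S, hS, v, Finset.mem_inter.mpr ⟨hv.1, hvS⟩⟩
    have factA : ∀ e : α, 2 ≤ (Φ'.filter fun P => (edge e ∩ P).Nonempty).card →
        2 ≤ (Φ.filter fun P => (edge e ∩ P).Nonempty).card := by
      intro e h
      obtain ⟨A, hA, B, hB, hAB⟩ := Finset.one_lt_card.mp h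
      rw [Finset.mem_filter] at hA hB
      rcases Finset.mem_insert.mp hA.1 with rfl | hA1 <;>
        rcases Finset.mem_insert.mp hB.1 with rfl | hB1
      · exact absurd rfl hAB
      · obtain ⟨S, hS, hSe⟩ := hgetS hA.2
        refine Finset.one_lt_card.mpr ⟨S, Finset.mem_filter.mpr ⟨hIΦ hS, hSe⟩, B,
          Finset.mem_filter.mpr ⟨(Finset.mem_sdiff.mp hB1).1, hB.2⟩, ?_⟩
        rintro rfl; exact (Finset.mem_sdiff.mp hB1).2 hS
      · obtain ⟨S, hS, hSe⟩ := hgetS hB.2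
        refine Finset.one_lt_card.mpr ⟨A,
          Finset.mem_filter.mpr ⟨(Finset.mem_sdiff.mp hA1).1, hA.2⟩, S,
          Finset.mem_filter.mpr ⟨hIΦ hS, hSe⟩, ?_⟩
        rintro rfl; exact (Finset.mem_sdiff.mp hA1).2 hS
      · exact Finset.one_lt_card.mpr ⟨A,
          Finset.mem_filter.mpr ⟨(Finset.mem_sdiff.mp hA1).1, hA.2⟩, B,
          Finset.mem_filter.mpr ⟨(Finset.mem_sdiff.mp hB1).1, hB.2⟩, hAB⟩
    have factB : ∀ e ∈ E, 2 ≤ (Sg.filter fun P => (edge e ∩ P).Nonempty).card →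
        ¬ 2 ≤ (Ψ.filter fun P => (edge e ∩ P).Nonempty).card →
        (2 ≤ (Φ.filter fun P => (edge e ∩ P).Nonempty).card ∧
          ¬ 2 ≤ (Φ'.filter fun P => (edge e ∩ P).Nonempty).card) := by
      intro e he hs hp
      have hene : (edge e).Nonempty := Finset.card_pos.mp (by have := hE e he; omega)
      have hp1 : (Ψ.filter fun P => (edge e ∩ P).Nonempty).card ≤ 1 := by omega
      obtain ⟨A, hA, B, hB, hAB⟩ := Finset.one_lt_card.mp hs
      rw [Finset.mem_filter] at hA hB
      have heT : edge e ⊆ T := by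
        have hmeet : (edge e ∩ T).Nonempty := by
          rcases Finset.mem_union.mp hA.1 with hA1 | hA1
          · rcases Finset.mem_union.mp hB.1 with hB1 | hB1
            · exfalso
              have h2 : 2 ≤ (Ψ.filter fun P => (edge e ∩ P).Nonempty).card :=
                Finset.one_lt_card.mpr ⟨A,
                  Finset.mem_filter.mpr ⟨Finset.mem_of_mem_erase hA1, hA.2⟩, B,
                  Finset.mem_filter.mpr ⟨Finset.mem_of_mem_erase hB1, hB.2⟩, hAB⟩
              omega
            · obtain ⟨S, hS, rfl⟩ := Finset.mem_image.mp hB1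
              obtain ⟨v, hv⟩ := hB.2
              rw [Finset.mem_inter, Finset.mem_inter] at hv
              exact ⟨v, Finset.mem_inter.mpr ⟨hv.1, hv.2.1⟩⟩
          · obtain ⟨S, hS, rfl⟩ := Finset.mem_image.mp hA1
            obtain ⟨v, hv⟩ := hA.2
            rw [Finset.mem_inter, Finset.mem_inter] at hv
            exact ⟨v, Finset.mem_inter.mpr ⟨hv.1, hv.2.1⟩⟩
        exact subset_of_cnt_le_one hΨ hT hmeet hp1
      have hpieces : ∀ C, C ∈ Sg → (edge e ∩ C).Nonempty → ∃ S ∈ I, C = T ∩ S := by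
        intro C hC hCe
        rcases Finset.mem_union.mp hC with hC1 | hC1
        · exfalso
          obtain ⟨v, hv⟩ := hCe
          rw [Finset.mem_inter] at hv
          have hd : Disjoint C T :=
            hΨ.2.1 C (Finset.mem_of_mem_erase hC1) T hT (Finset.ne_of_mem_erase hC1)
          exact Finset.disjoint_left.mp hd hv.2 (heT hv.1)
        · obtain ⟨S, hS, rfl⟩ := Finset.mem_image.mp hC1
          exact ⟨S, hS, rfl⟩
      obtain ⟨S₁, hS₁, rfl⟩ := hpieces A hA.1 hA.2
      obtain ⟨S₂, hS₂, rfl⟩ := hpieces B hB.1 hB.2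
      have hS12 : S₁ ≠ S₂ := fun h => hAB (by rw [h])
      constructor
      · refine Finset.one_lt_card.mpr ⟨S₁, ?_, S₂, ?_, hS12⟩
        · refine Finset.mem_filter.mpr ⟨hIΦ hS₁, ?_⟩
          obtain ⟨v, hv⟩ := hA.2
          rw [Finset.mem_inter, Finset.mem_inter] at hv
          exact ⟨v, Finset.mem_inter.mpr ⟨hv.1, hv.2.2⟩⟩
        · refine Finset.mem_filter.mpr ⟨hIΦ hS₂, ?_⟩
          obtain ⟨v, hv⟩ := hB.2
          rw [Finset.mem_inter, Finset.mem_inter] at hv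
          exact ⟨v, Finset.mem_inter.mpr ⟨hv.1, hv.2.2⟩⟩
      · rw [filter_eq_singleton_of_subset hΦ'p hUΦ' hene (heT.trans hTU)]
        simp
    -- the exchange inequality on edge sums
    have hsum : (∑ e ∈ delta edge E Φ', x e) + (∑ e ∈ delta edge E Sg, x e) ≤
        (∑ e ∈ delta edge E Φ, x e) + (∑ e ∈ delta edge E Ψ, x e) := by
      rw [delta_of_partition edge E hΦ'p.2.2, delta_of_partition edge E hSgp.2.2,
        delta_of_partition edge E hΦ.2.2, delta_of_partition edge E hΨ.2.2,
        Finset.sum_filter, Finset.sum_filter, Finset.sum_filter, Finset.sum_filter,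
        ← Finset.sum_add_distrib, ← Finset.sum_add_distrib]
      refine Finset.sum_le_sum ?_
      intro e he
      exact ite_ineq (hx e he) _ _ _ _ (factA e) (factB e he)
    have hcards : (Φ'.card : ℝ) + (Sg.card : ℝ) = (Φ.card : ℝ) + (Ψ.card : ℝ) := by
      have h : Φ'.card + Sg.card = Φ.card + Ψ.card := by omega
      exact_mod_cast h
    have hSgmin := hmin Sg hSgp
    have hβ : β * ((Φ'.card : ℝ) - 1) + β * ((Sg.card : ℝ) - 1) =
        β * ((Φ.card : ℝ) - 1) + β * ((Ψ.card : ℝ) - 1) := by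
      linear_combination β * hcards
    have hkey : (∑ e ∈ delta edge E Φ', x e) - β * ((Φ'.card : ℝ) - 1) ≤
        (∑ e ∈ delta edge E Ψ, x e) - β * ((Ψ.card : ℝ) - 1) := by
      linarith
    -- I has at least two members
    have hI2 : 2 ≤ I.card := by
      have h2 := two_le_of_no_part hΦ he₀ne houtside
      refine le_trans h2 (Finset.card_le_card ?_)
      intro P hP
      rw [Finset.mem_filter] at hP ⊢
      obtain ⟨v, hv⟩ := hP.2
      rw [Finset.mem_inter] at hv
      exact ⟨hP.1, v, Finset.mem_inter.mpr ⟨hv.2, he₀T hv.1⟩⟩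
    -- conclude
    have hcntΦ'e₀ : ¬ 2 ≤ (Φ'.filter fun P => (edge e₀ ∩ P).Nonempty).card := by
      rw [filter_eq_singleton_of_subset hΦ'p hUΦ' he₀ne he₀U]; simp
    have hcntΨe₀ : ¬ 2 ≤ (Ψ.filter fun P => (edge e₀ ∩ P).Nonempty).card := by
      rw [filter_eq_singleton_of_subset hΨ hT he₀ne he₀T]; simp
    refine ⟨Φ', hΦ'p, ?_, Or.inr ⟨I, hIΦ, hI2, he₀U, rfl⟩⟩
    intro Ps hPs
    have e1 := sum_delta_insert edge E x hΦ'p.2.2 he₀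
    rw [if_neg hcntΦ'e₀, add_zero] at e1
    have e2 := sum_delta_insert edge E x hΨ.2.2 he₀
    rw [if_neg hcntΨe₀, add_zero] at e2
    have e3 := hΨmin' Ps hPs
    rw [e1]
    linarith
  · -- e₀ crosses every optimal partition of H' : Φ itself is optimal for H'
    push_neg at hcase
    have hcntΨ : 2 ≤ (Ψ.filter fun P => (edge e₀ ∩ P).Nonempty).card :=
      two_le_of_no_part hΨ he₀ne hcase
    have hcntΦ : 2 ≤ (Φ.filter fun P => (edge e₀ ∩ P).Nonempty).card :=
      two_le_of_no_part hΦ he₀ne houtside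
    refine ⟨Φ, hΦ, ?_, Or.inl rfl⟩
    intro Ps hPs
    have e1 := sum_delta_insert edge E x hΦ.2.2 he₀
    rw [if_pos hcntΦ] at e1
    have e2 := sum_delta_insert edge E x hΨ.2.2 he₀
    rw [if_pos hcntΨ] at e2
    have e3 := hΨmin' Ps hPs
    have e4 := hmin Ψ hΨ
    rw [e1]
    linarith
end

section
/- Let H = (V, E) be a hypergraph, let k be a positive integer, let u : E → ℕ, and let d : E → ℝ with d(e) ≥ 0 for all e ∈ E. Let Q = { x ∈ ℝ^E : 0 ≤ x(e) ≤ u(e) for all e ∈ E, and x(δ(𝒫)) ≥ k(|𝒫| − 1) for every partition 𝒫 of V into nonempty parts }. If Q is nonempty, then there exists an integer-valued vector x* ∈ Q such that Σ_{e∈E} d(e)x*(e) ≤ Σ_{e∈E} d(e)x(e) for every x ∈ Q; that is, the reinforcement linear program min{ d·x : x ∈ Q } has an integer optimal solution. -/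
open Finset

variable {V α : Type*}

/-- The feasible region of the reinforcement LP: `0 ≤ x(e) ≤ u(e)` for all `e ∈ E` and
`x(δ(Ps)) ≥ k(|Ps| - 1)` for every partition `Ps` of `V` into nonempty parts. -/
def reinforcementQ [Fintype V] [DecidableEq V] (edge : α → Finset V) (E : Finset α)
    (k : ℕ) (u : α → ℕ) : Set (α → ℝ) :=
  {x | (∀ e ∈ E, 0 ≤ x e ∧ x e ≤ (u e : ℝ)) ∧
    ∀ Ps : Finset (Finset V), IsPartition Ps →
      (k : ℝ) * ((Ps.card : ℝ) - 1) ≤ ∑ e ∈ delta edge E Ps, x e}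

/-!
Coordinates outside `E` are unconstrained, so we minimise `d · x` over the compact set of feasible
`x` vanishing off `E` and take an extreme point `xs` of the face of minimisers (Krein–Milman).
If `xs` had fractional coordinates `F ≠ ∅`, we find a direction `w ≠ 0` supported on `F` with
`w(δ(𝒫)) = 0` for every tight `𝒫` (one with `x(δ(𝒫)) = k(|𝒫| - 1)`); then `xs ± t w` stays
feasible for small `t`, contradicting extremality.

The direction comes from uncrossing. The number of parts is supermodular,
`|𝒫| + |𝒬| ≤ |𝒫 ∧ 𝒬| + |𝒫 ∨ 𝒬|`: this is the dimension formula for the spaces of functions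
constant on the parts. With `δ(𝒫 ∧ 𝒬) ⊆ δ(𝒫) ∪ δ(𝒬)` and `δ(𝒫 ∨ 𝒬) ⊆ δ(𝒫) ∩ δ(𝒬)` it makes the
join of two tight partitions tight, with every positive edge of `δ(𝒫) ∩ δ(𝒬)` in `δ(𝒫 ∨ 𝒬)`.
Take a tight `𝒫₁` whose trace `δ(𝒫₁) ∩ F` is nonempty and of minimal size. It has two edges
`a ≠ b`, since `x(δ(𝒫₁))` is an integer, and joining with `𝒫₁` shows that every tight partition
contains both of them or neither, so `w = 𝟙_a - 𝟙_b` works. If no tight trace is nonempty, any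
`w = 𝟙_a` with `a ∈ F` works.
-/

lemma AddSubgroup.mem_of_sum_mem_of_forall_ne {M ι : Type*} [AddCommGroup M] (H : AddSubgroup M)
    {s : Finset ι} {f : ι → M} {a : ι} (ha : a ∈ s) (hs : ∑ i ∈ s, f i ∈ H)
    (h : ∀ i ∈ s, i ≠ a → f i ∈ H) : f a ∈ H := by
  classical
  rw [← add_sum_erase s f ha] at hs
  exact (H.add_mem_cancel_right
    (H.sum_mem fun i hi => h i (mem_of_mem_erase hi) (ne_of_mem_erase hi))).mp hs

theorem IsCompact.exists_mem_extremePoints_forall_le {W : Type*} [AddCommGroup W] [Module ℝ W]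
    [TopologicalSpace W] [T2Space W] [IsTopologicalAddGroup W] [ContinuousSMul ℝ W]
    [LocallyConvexSpace ℝ W] {s : Set W} (hs : IsCompact s) (hne : s.Nonempty)
    (l : StrongDual ℝ W) : ∃ x ∈ s.extremePoints ℝ, ∀ y ∈ s, l x ≤ l y := by
  have hB : IsExposed ℝ s ((-l).toExposed s) := ContinuousLinearMap.toExposed.isExposed
  obtain ⟨x₀, hx₀, hmin⟩ := hs.exists_isMinOn hne l.continuous.continuousOn
  obtain ⟨x, hx⟩ := (hB.isCompact hs).extremePoints_nonempty
    ⟨x₀, hx₀, fun y hy => by simpa using hmin hy⟩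
  refine ⟨x, hB.isExtreme.extremePoints_subset_extremePoints hx, fun y hy => ?_⟩
  simpa using (extremePoints_subset hx).2 y hy

open Filter Topology in
lemma tendsto_sum_add_smul (x w : α → ℝ) (s : Finset α) :
    Tendsto (fun t : ℝ => ∑ e ∈ s, (x + t • w) e) (𝓝 0) (𝓝 (∑ e ∈ s, x e)) := by
  have hc : Continuous fun t : ℝ => ∑ e ∈ s, (x + t • w) e := by
    simp only [Pi.add_apply, Pi.smul_apply, smul_eq_mul]
    fun_prop
  simpa using hc.tendsto 0

section Partitions

def SameBlock (P : Finset (Finset V)) (v w : V) : Prop :=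
  ∃ A ∈ P, v ∈ A ∧ w ∈ A

def relInvariant (r : V → V → Prop) : Submodule ℝ (V → ℝ) where
  carrier := {f | ∀ v w, r v w → f v = f w}
  add_mem' hf hg v w h := by simp [hf v w h, hg v w h]
  zero_mem' _ _ _ := rfl
  smul_mem' c f hf v w h := by simp [hf v w h]

lemma relInvariant_anti {r s : V → V → Prop} (h : r ≤ s) : relInvariant s ≤ relInvariant r :=
  fun _ hf v w hvw => hf v w (h v w hvw)

lemma relInvariant_inf_le_eqvGen (r s : V → V → Prop) :
    relInvariant r ⊓ relInvariant s ≤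
      relInvariant (Relation.EqvGen fun v w => r v w ∨ s v w) := by
  rintro f ⟨hr, hs⟩ v w h
  induction h with
  | rel v w h => exact h.elim (hr v w) (hs v w)
  | refl => rfl
  | symm _ _ _ ih => exact ih.symm
  | trans _ _ _ _ _ ih₁ ih₂ => exact ih₁.trans ih₂

variable [Fintype V] [DecidableEq V] {P Q : Finset (Finset V)} {r : V → V → Prop}

open scoped Classical

lemma IsPartition.eq_of_mem_of_mem (hP : IsPartition P) {A B : Finset V} (hA : A ∈ P)
    (hB : B ∈ P) {v : V} (hvA : v ∈ A) (hvB : v ∈ B) : A = B := by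
  by_contra h
  exact disjoint_left.mp (hP.2.1 A hA B hB h) hvA hvB

lemma IsPartition.exists_mem (hP : IsPartition P) (v : V) : ∃ A ∈ P, v ∈ A := by
  have hv : v ∈ P.sup id := hP.2.2 ▸ mem_univ v
  simpa using hv

lemma IsPartition.equivalence_sameBlock (hP : IsPartition P) : Equivalence (SameBlock P) where
  refl v := let ⟨A, hA, hv⟩ := hP.exists_mem v; ⟨A, hA, hv, hv⟩
  symm := fun ⟨A, hA, hv, hw⟩ => ⟨A, hA, hw, hv⟩
  trans := fun ⟨A, hA, hu, hv⟩ ⟨_, hB, hv', hw⟩ =>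
    ⟨A, hA, hu, hP.eq_of_mem_of_mem hB hA hv' hv ▸ hw⟩

noncomputable def eqvClasses (r : V → V → Prop) : Finset (Finset V) :=
  univ.image fun v => univ.filter (r v)

lemma mem_eqvClasses {A : Finset V} : A ∈ eqvClasses r ↔ ∃ v, univ.filter (r v) = A := by
  simp [eqvClasses]

lemma Equivalence.sameBlock_eqvClasses (hr : Equivalence r) (v w : V) :
    SameBlock (eqvClasses r) v w ↔ r v w := by
  simp only [SameBlock, mem_eqvClasses]
  constructor
  · rintro ⟨_, ⟨u, rfl⟩, hv, hw⟩
    simp only [mem_filter, mem_univ, true_and] at hv hw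
    exact hr.trans (hr.symm hv) hw
  · intro h
    exact ⟨_, ⟨v, rfl⟩, by simpa using hr.refl v, by simpa using h⟩

lemma Equivalence.isPartition_eqvClasses (hr : Equivalence r) : IsPartition (eqvClasses r) := by
  refine ⟨?_, ?_, ?_⟩
  · intro A hA
    obtain ⟨v, rfl⟩ := mem_eqvClasses.mp hA
    exact ⟨v, by simpa using hr.refl v⟩
  · intro A hA B hB hAB
    obtain ⟨u, rfl⟩ := mem_eqvClasses.mp hA
    obtain ⟨u', rfl⟩ := mem_eqvClasses.mp hB
    refine disjoint_left.mpr fun z hz hz' => hAB ?_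
    simp only [mem_filter, mem_univ, true_and] at hz hz'
    ext w
    simp only [mem_filter, mem_univ, true_and]
    exact ⟨hr.trans (hr.trans hz' (hr.symm hz)), hr.trans (hr.trans hz (hr.symm hz'))⟩
  · refine eq_univ_iff_forall.mpr fun v => mem_sup.mpr ?_
    exact ⟨_, mem_eqvClasses.mpr ⟨v, rfl⟩, by simpa using hr.refl v⟩

lemma IsPartition.eqvClasses_sameBlock (hP : IsPartition P) : eqvClasses (SameBlock P) = P := by
  have hblock {A : Finset V} (hA : A ∈ P) {v : V} (hv : v ∈ A) :
      univ.filter (SameBlock P v) = A := by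
    ext w
    simp only [mem_filter, mem_univ, true_and]
    exact ⟨fun ⟨C, hC, hvC, hwC⟩ => hP.eq_of_mem_of_mem hC hA hvC hv ▸ hwC,
      fun hw => ⟨A, hA, hv, hw⟩⟩
  ext A
  rw [mem_eqvClasses]
  constructor
  · rintro ⟨v, rfl⟩
    obtain ⟨B, hB, hvB⟩ := hP.exists_mem v
    exact hblock hB hvB ▸ hB
  · intro hA
    obtain ⟨v, hv⟩ := hP.1 A hA
    exact ⟨v, hblock hA hv⟩

lemma Equivalence.finrank_relInvariant (hr : Equivalence r) :
    Module.finrank ℝ (relInvariant r) = #(eqvClasses r) := by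
  let π : V → eqvClasses r := fun v => ⟨univ.filter (r v), mem_eqvClasses.mpr ⟨v, rfl⟩⟩
  have hπ : Function.Surjective π := by
    rintro ⟨A, hA⟩
    obtain ⟨v, rfl⟩ := mem_eqvClasses.mp hA
    exact ⟨v, rfl⟩
  have hπ_eq {v w : V} : π v = π w ↔ r v w := by
    simp only [π, Subtype.mk.injEq]
    refine ⟨fun h => ?_, fun h => ?_⟩
    · have hw : w ∈ univ.filter (r w) := by simpa using hr.refl w
      simpa [← h] using hw
    · ext z
      simpa using ⟨hr.trans (hr.symm h), hr.trans h⟩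
  have hrange : LinearMap.range (LinearMap.funLeft ℝ ℝ π) = relInvariant r := by
    ext f
    refine ⟨?_, fun hf => ?_⟩
    · rintro ⟨g, rfl⟩ v w h
      simp [LinearMap.funLeft, hπ_eq.mpr h]
    · exact ⟨f ∘ Function.surjInv hπ,
        funext fun v => hf _ _ (hπ_eq.mp (Function.surjInv_eq hπ (π v)))⟩
  rw [← hrange, LinearMap.finrank_range_of_inj (LinearMap.funLeft_injective_of_surjective _ _ _ hπ),
    Module.finrank_fintype_fun_eq_card, Fintype.card_coe]

noncomputable def partitionMeet (P Q : Finset (Finset V)) : Finset (Finset V) :=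
  eqvClasses fun v w => SameBlock P v w ∧ SameBlock Q v w

noncomputable def partitionJoin (P Q : Finset (Finset V)) : Finset (Finset V) :=
  eqvClasses (Relation.EqvGen fun v w => SameBlock P v w ∨ SameBlock Q v w)

lemma equivalence_sameBlock_and (hP : IsPartition P) (hQ : IsPartition Q) :
    Equivalence fun v w => SameBlock P v w ∧ SameBlock Q v w :=
  have hP := hP.equivalence_sameBlock
  have hQ := hQ.equivalence_sameBlock
  ⟨fun v => ⟨hP.refl v, hQ.refl v⟩, fun h => ⟨hP.symm h.1, hQ.symm h.2⟩,
    fun h h' => ⟨hP.trans h.1 h'.1, hQ.trans h.2 h'.2⟩⟩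

lemma IsPartition.partitionMeet (hP : IsPartition P) (hQ : IsPartition Q) :
    IsPartition (partitionMeet P Q) :=
  (equivalence_sameBlock_and hP hQ).isPartition_eqvClasses

lemma isPartition_partitionJoin (P Q : Finset (Finset V)) : IsPartition (partitionJoin P Q) :=
  (Relation.EqvGen.is_equivalence _).isPartition_eqvClasses

lemma sameBlock_partitionMeet (hP : IsPartition P) (hQ : IsPartition Q) {v w : V} :
    SameBlock (partitionMeet P Q) v w ↔ SameBlock P v w ∧ SameBlock Q v w :=
  (equivalence_sameBlock_and hP hQ).sameBlock_eqvClasses v w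

lemma sameBlock_partitionJoin {v w : V} (h : SameBlock P v w ∨ SameBlock Q v w) :
    SameBlock (partitionJoin P Q) v w :=
  ((Relation.EqvGen.is_equivalence _).sameBlock_eqvClasses v w).mpr (.rel v w h)

theorem card_add_card_le_card_partitionMeet_add_card_partitionJoin
    (hP : IsPartition P) (hQ : IsPartition Q) :
    #P + #Q ≤ #(partitionMeet P Q) + #(partitionJoin P Q) := by
  have hPr := hP.equivalence_sameBlock
  have hQr := hQ.equivalence_sameBlock
  calc #P + #Q
      = Module.finrank ℝ (relInvariant (SameBlock P)) +
          Module.finrank ℝ (relInvariant (SameBlock Q)) := by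
        rw [hPr.finrank_relInvariant, hQr.finrank_relInvariant, hP.eqvClasses_sameBlock,
          hQ.eqvClasses_sameBlock]
    _ = Module.finrank ℝ ↥(relInvariant (SameBlock P) ⊔ relInvariant (SameBlock Q)) +
          Module.finrank ℝ ↥(relInvariant (SameBlock P) ⊓ relInvariant (SameBlock Q)) :=
        (Submodule.finrank_sup_add_finrank_inf_eq _ _).symm
    _ ≤ Module.finrank ℝ (relInvariant fun v w => SameBlock P v w ∧ SameBlock Q v w) +
          Module.finrank ℝ
            (relInvariant (Relation.EqvGen fun v w => SameBlock P v w ∨ SameBlock Q v w)) :=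
        add_le_add
          (Submodule.finrank_mono (sup_le (relInvariant_anti fun _ _ h => h.1)
            (relInvariant_anti fun _ _ h => h.2)))
          (Submodule.finrank_mono (relInvariant_inf_le_eqvGen _ _))
    _ = #(partitionMeet P Q) + #(partitionJoin P Q) := by
        rw [(equivalence_sameBlock_and hP hQ).finrank_relInvariant,
          (Relation.EqvGen.is_equivalence _).finrank_relInvariant]
        rfl

end Partitions

section Reinforcement

open Filter Topology

variable [Fintype V] [DecidableEq V] {edge : α → Finset V} {E : Finset α} {k : ℕ}
  {u : α → ℕ} {x : α → ℝ} {P P₁ Q R : Finset (Finset V)}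

lemma IsPartition.mem_delta_iff (hP : IsPartition P) {e : α} :
    e ∈ delta edge E P ↔ e ∈ E ∧ ∃ v ∈ edge e, ∃ w ∈ edge e, ¬ SameBlock P v w := by
  simp only [delta, mem_filter, hP.2.2, subset_univ, true_and]
  refine and_congr_right fun _ => ⟨fun hcard => ?_, ?_⟩
  · obtain ⟨A, hA, B, hB, hAB⟩ := one_lt_card.mp hcard
    obtain ⟨hA, v, hv⟩ := mem_filter.mp hA
    obtain ⟨hB, w, hw⟩ := mem_filter.mp hB
    rw [mem_inter] at hv hw
    refine ⟨v, hv.1, w, hw.1, fun ⟨C, hC, hvC, hwC⟩ => hAB ?_⟩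
    exact (hP.eq_of_mem_of_mem hA hC hv.2 hvC).trans (hP.eq_of_mem_of_mem hC hB hwC hw.2)
  · rintro ⟨v, hv, w, hw, hvw⟩
    obtain ⟨A, hA, hvA⟩ := hP.exists_mem v
    obtain ⟨B, hB, hwB⟩ := hP.exists_mem w
    refine one_lt_card.mpr ⟨A, mem_filter.mpr ⟨hA, v, mem_inter.mpr ⟨hv, hvA⟩⟩,
      B, mem_filter.mpr ⟨hB, w, mem_inter.mpr ⟨hw, hwB⟩⟩, ?_⟩
    rintro rfl
    exact hvw ⟨A, hA, hvA, hwB⟩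

lemma delta_subset_delta_of_sameBlock (hP : IsPartition P) (hR : IsPartition R)
    (h : ∀ v w, SameBlock P v w → SameBlock R v w) : delta edge E R ⊆ delta edge E P := by
  intro e he
  obtain ⟨heE, v, hv, w, hw, hvw⟩ := hR.mem_delta_iff.mp he
  exact hP.mem_delta_iff.mpr ⟨heE, v, hv, w, hw, fun h' => hvw (h v w h')⟩

lemma delta_partitionMeet_subset [DecidableEq α] (hP : IsPartition P) (hQ : IsPartition Q) :
    delta edge E (partitionMeet P Q) ⊆ delta edge E P ∪ delta edge E Q := by
  intro e he
  obtain ⟨heE, v, hv, w, hw, hvw⟩ := (hP.partitionMeet hQ).mem_delta_iff.mp he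
  rw [sameBlock_partitionMeet hP hQ, not_and_or] at hvw
  rcases hvw with hvw | hvw
  · exact mem_union_left _ (hP.mem_delta_iff.mpr ⟨heE, v, hv, w, hw, hvw⟩)
  · exact mem_union_right _ (hQ.mem_delta_iff.mpr ⟨heE, v, hv, w, hw, hvw⟩)

lemma delta_partitionJoin_subset [DecidableEq α] (hP : IsPartition P) (hQ : IsPartition Q) :
    delta edge E (partitionJoin P Q) ⊆ delta edge E P ∩ delta edge E Q :=
  subset_inter
    (delta_subset_delta_of_sameBlock hP (isPartition_partitionJoin P Q)
      fun _ _ h => sameBlock_partitionJoin (.inl h))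
    (delta_subset_delta_of_sameBlock hQ (isPartition_partitionJoin P Q)
      fun _ _ h => sameBlock_partitionJoin (.inr h))

def IsTight (edge : α → Finset V) (E : Finset α) (k : ℕ) (x : α → ℝ)
    (P : Finset (Finset V)) : Prop :=
  IsPartition P ∧ ∑ e ∈ delta edge E P, x e = k * ((#P : ℝ) - 1)

theorem IsTight.uncross [DecidableEq α] (hx : x ∈ reinforcementQ edge E k u)
    (hP : IsTight edge E k x P) (hQ : IsTight edge E k x Q) :
    IsTight edge E k x (partitionJoin P Q) ∧
      ∀ e ∈ delta edge E P ∩ delta edge E Q, 0 < x e → e ∈ delta edge E (partitionJoin P Q) := by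
  have hx0 : ∀ e ∈ delta edge E P ∪ delta edge E Q, 0 ≤ x e := fun e he =>
    (hx.1 e (union_subset (filter_subset _ _) (filter_subset _ _) he)).1
  have hcard : (#P : ℝ) + #Q ≤ #(partitionMeet P Q) + #(partitionJoin P Q) := by
    exact_mod_cast card_add_card_le_card_partitionMeet_add_card_partitionJoin hP.1 hQ.1
  have hk := mul_le_mul_of_nonneg_left hcard (Nat.cast_nonneg (α := ℝ) k)
  have hMle : ∑ e ∈ delta edge E (partitionMeet P Q), x e ≤
      ∑ e ∈ delta edge E P ∪ delta edge E Q, x e :=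
    sum_le_sum_of_subset_of_nonneg (delta_partitionMeet_subset hP.1 hQ.1)
      fun e he _ => hx0 e he
  have hJle : ∑ e ∈ delta edge E (partitionJoin P Q), x e ≤
      ∑ e ∈ delta edge E P ∩ delta edge E Q, x e :=
    sum_le_sum_of_subset_of_nonneg (delta_partitionJoin_subset hP.1 hQ.1)
      fun e he _ => hx0 e (inter_subset_union he)
  have hunion := sum_union_inter (s₁ := delta edge E P) (s₂ := delta edge E Q) (f := x)
  have hMlow := hx.2 _ (hP.1.partitionMeet hQ.1)
  have hJlow := hx.2 _ (isPartition_partitionJoin P Q)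
  -- the chain `k(|M|-1) + k(|J|-1) ≤ x(δM) + x(δJ) ≤ x(δP ∪ δQ) + x(δP ∩ δQ) = k(|P|-1) + k(|Q|-1)`
  -- closes up by supermodularity, so each of its inequalities is an equality
  refine ⟨⟨isPartition_partitionJoin P Q, by linarith [hP.2, hQ.2]⟩, fun e he hxe => ?_⟩
  by_contra heJ
  have := sum_lt_sum_of_subset (delta_partitionJoin_subset hP.1 hQ.1) he heJ hxe
    fun j hj _ => hx0 j (inter_subset_union hj)
  linarith [hP.2, hQ.2]

open scoped Classical in
noncomputable def fractionalEdges (E : Finset α) (x : α → ℝ) : Finset α :=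
  E.filter fun e => ¬ ∃ n : ℤ, x e = n

lemma mem_fractionalEdges {e : α} :
    e ∈ fractionalEdges E x ↔ e ∈ E ∧ ¬ ∃ n : ℤ, x e = n := by
  classical
  simp [fractionalEdges]

lemma mem_Ioo_of_mem_fractionalEdges (hx : x ∈ reinforcementQ edge E k u) {e : α}
    (he : e ∈ fractionalEdges E x) : x e ∈ Set.Ioo 0 (u e : ℝ) := by
  obtain ⟨heE, hfrac⟩ := mem_fractionalEdges.mp he
  obtain ⟨h0, hu⟩ := hx.1 e heE
  exact ⟨h0.lt_of_ne fun h => hfrac ⟨0, by simp [← h]⟩,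
    hu.lt_of_ne fun h => hfrac ⟨u e, by simp [h]⟩⟩

lemma IsTight.card_delta_inter_fractionalEdges_ne_one [DecidableEq α]
    (hP : IsTight edge E k x P) : #(delta edge E P ∩ fractionalEdges E x) ≠ 1 := by
  intro h
  obtain ⟨a, ha⟩ := card_eq_one.mp h
  have haδ : a ∈ delta edge E P ∩ fractionalEdges E x := ha ▸ mem_singleton_self a
  let ℤR := (Int.castAddHom ℝ).range
  have hint {r : ℝ} : r ∈ ℤR ↔ ∃ n : ℤ, r = n := by
    simp only [ℤR, AddMonoidHom.mem_range, Int.coe_castAddHom, eq_comm]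
  have hsum : ∑ e ∈ delta edge E P, x e ∈ ℤR :=
    hint.mpr ⟨k * #P - k, by rw [hP.2]; push_cast; ring⟩
  refine (mem_fractionalEdges.mp (mem_inter.mp haδ).2).2 (hint.mp
    (ℤR.mem_of_sum_mem_of_forall_ne (mem_inter.mp haδ).1 hsum fun e he hea => hint.mpr ?_))
  by_contra hfrac
  have : e ∈ delta edge E P ∩ fractionalEdges E x :=
    mem_inter.mpr ⟨he, mem_fractionalEdges.mpr ⟨filter_subset _ _ he, hfrac⟩⟩
  exact hea (by simpa [ha] using this)

def IsBalancedDirection (edge : α → Finset V) (E : Finset α) (k : ℕ) (x w : α → ℝ) : Prop :=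
  (∀ e, w e ≠ 0 → e ∈ fractionalEdges E x) ∧
    ∀ P, IsTight edge E k x P → ∑ e ∈ delta edge E P, w e = 0

theorem IsTight.mem_delta_of_mem_delta_of_minimal [DecidableEq α]
    (hx : x ∈ reinforcementQ edge E k u) (hP₁ : IsTight edge E k x P₁)
    (hmin : ∀ Q, IsTight edge E k x Q → (delta edge E Q ∩ fractionalEdges E x).Nonempty →
      #(delta edge E P₁ ∩ fractionalEdges E x) ≤ #(delta edge E Q ∩ fractionalEdges E x))
    (hP : IsTight edge E k x P) {a b : α} (ha : a ∈ delta edge E P₁ ∩ fractionalEdges E x)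
    (hb : b ∈ delta edge E P₁ ∩ fractionalEdges E x) (haP : a ∈ delta edge E P) :
    b ∈ delta edge E P := by
  rw [mem_inter] at ha
  obtain ⟨hJ, hmem⟩ := hP.uncross hx hP₁
  have hJsub := delta_partitionJoin_subset (edge := edge) (E := E) hP.1 hP₁.1
  have haJ := hmem a (mem_inter.mpr ⟨haP, ha.1⟩) (mem_Ioo_of_mem_fractionalEdges hx ha.2).1
  have heq : delta edge E (partitionJoin P P₁) ∩ fractionalEdges E x =
      delta edge E P₁ ∩ fractionalEdges E x :=
    eq_of_subset_of_card_le (inter_subset_inter_right fun e he => (mem_inter.mp (hJsub he)).2)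
      (hmin _ hJ ⟨a, mem_inter.mpr ⟨haJ, ha.2⟩⟩)
  exact (mem_inter.mp (hJsub (mem_inter.mp (heq ▸ hb)).1)).1

theorem exists_isBalancedDirection_ne_zero [DecidableEq α] (hx : x ∈ reinforcementQ edge E k u)
    (hF : (fractionalEdges E x).Nonempty) : ∃ w ≠ 0, IsBalancedDirection edge E k x w := by
  classical
  set F := fractionalEdges E x
  by_cases hS : ∃ P, IsTight edge E k x P ∧ (delta edge E P ∩ F).Nonempty
  swap
  · obtain ⟨a, ha⟩ := hF
    refine ⟨Pi.single a 1, fun h => by simpa using congr_fun h a, fun e he => ?_, fun P hP => ?_⟩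
    · obtain rfl : e = a := by by_contra h; simp [h] at he
      exact ha
    · have haP : a ∉ delta edge E P := fun h => hS ⟨P, hP, a, mem_inter.mpr ⟨h, ha⟩⟩
      simp [sum_pi_single', haP]
  obtain ⟨P₁, hP₁, hmin⟩ := exists_min_image
    (univ.filter fun P => IsTight edge E k x P ∧ (delta edge E P ∩ F).Nonempty)
    (fun P => #(delta edge E P ∩ F)) (let ⟨P, hP⟩ := hS; ⟨P, mem_filter.mpr ⟨mem_univ P, hP⟩⟩)
  obtain ⟨hP₁, hne⟩ := (mem_filter.mp hP₁).2
  have hcomove {P} (hP : IsTight edge E k x P) {a b} (ha : a ∈ delta edge E P₁ ∩ F)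
      (hb : b ∈ delta edge E P₁ ∩ F) : a ∈ delta edge E P → b ∈ delta edge E P :=
    hP₁.mem_delta_of_mem_delta_of_minimal hx
      (fun Q hQ hQF => hmin Q (mem_filter.mpr ⟨mem_univ Q, hQ, hQF⟩)) hP ha hb
  obtain ⟨a, ha, b, hb, hab⟩ := one_lt_card.mp (lt_of_le_of_ne (card_pos.mpr hne)
    hP₁.card_delta_inter_fractionalEdges_ne_one.symm)
  refine ⟨Pi.single a 1 - Pi.single b 1, fun h => by simpa [hab] using congr_fun h a,
    fun e he => ?_, fun P hP => ?_⟩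
  · by_cases hea : e = a
    · exact hea ▸ (mem_inter.mp ha).2
    by_cases heb : e = b
    · exact heb ▸ (mem_inter.mp hb).2
    simp [hea, heb] at he
  · simp only [Pi.sub_apply, sum_sub_distrib, sum_pi_single']
    by_cases haP : a ∈ delta edge E P
    · simp [haP, hcomove hP ha hb haP]
    · have hbP : b ∉ delta edge E P := fun h => haP (hcomove hP hb ha h)
      simp [haP, hbP]

theorem IsBalancedDirection.eventually_add_smul_mem (hx : x ∈ reinforcementQ edge E k u)
    {w : α → ℝ} (hw : IsBalancedDirection edge E k x w) :
    ∀ᶠ t in 𝓝 (0 : ℝ), x + t • w ∈ reinforcementQ edge E k u := by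
  refine ((eventually_all_finset E).mpr fun e he => ?_).and (eventually_all.mpr fun P => ?_)
  · by_cases hwe : w e = 0
    · exact .of_forall fun t => by simpa [hwe] using hx.1 e he
    have hIoo := mem_Ioo_of_mem_fractionalEdges hx (hw.1 e hwe)
    filter_upwards [(tendsto_sum_add_smul x w {e}).eventually (Ioo_mem_nhds (by simpa using hIoo.1)
      (by simpa using hIoo.2))] with t ht
    simp only [sum_singleton] at ht
    exact ⟨ht.1.le, ht.2.le⟩
  · by_cases hP : IsPartition P
    swap
    · exact .of_forall fun _ h => absurd h hP
    by_cases htight : ∑ e ∈ delta edge E P, x e = k * ((#P : ℝ) - 1)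
    · refine .of_forall fun t _ => ?_
      simp [sum_add_distrib, ← mul_sum, hw.2 P ⟨hP, htight⟩, htight]
    · filter_upwards [(tendsto_sum_add_smul x w _).eventually_const_lt
        ((hx.2 P hP).lt_of_ne' htight)] with t ht _ using ht.le

lemma isClosed_reinforcementQ (edge : α → Finset V) (E : Finset α) (k : ℕ) (u : α → ℕ) :
    IsClosed (reinforcementQ edge E k u) := by
  have hQ : reinforcementQ edge E k u =
      (⋂ e ∈ E, {x : α → ℝ | 0 ≤ x e ∧ x e ≤ u e}) ∩ ⋂ (P) (_ : IsPartition P),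
        {x | k * ((#P : ℝ) - 1) ≤ ∑ e ∈ delta edge E P, x e} := by
    ext
    simp [reinforcementQ]
  rw [hQ]
  refine (isClosed_biInter fun e _ => ?_).inter
    (isClosed_iInter fun P => isClosed_iInter fun _ => ?_)
  · exact (isClosed_le continuous_const (continuous_apply e)).inter
      (isClosed_le (continuous_apply e) continuous_const)
  · exact isClosed_le continuous_const (continuous_finsetSum _ fun e _ => continuous_apply e)

lemma isCompact_reinforcementQ_inter (edge : α → Finset V) (E : Finset α) (k : ℕ) (u : α → ℕ) :
    IsCompact (reinforcementQ edge E k u ∩ {x | ∀ e ∉ E, x e = 0}) := by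
  classical
  refine (isCompact_univ_pi fun e => isCompact_Icc (a := (0 : ℝ))
    (b := if e ∈ E then (u e : ℝ) else 0)).of_isClosed_subset
    ((isClosed_reinforcementQ edge E k u).inter ?_) ?_
  · simp only [Set.ofPred_forall]
    exact isClosed_iInter fun e => isClosed_iInter fun _ =>
      isClosed_eq (continuous_apply e) continuous_const
  · rintro x ⟨hxQ, hx0⟩ e -
    by_cases he : e ∈ E
    · simpa [he] using hxQ.1 e he
    · simp [he, hx0 e he]

lemma ite_mem_reinforcementQ_inter [DecidablePred (· ∈ E)] (hx : x ∈ reinforcementQ edge E k u) :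
    (fun e => if e ∈ E then x e else 0) ∈ reinforcementQ edge E k u ∩ {x | ∀ e ∉ E, x e = 0} := by
  refine ⟨⟨fun e he => by simpa [he] using hx.1 e he, fun P hP => ?_⟩, fun e he => if_neg he⟩
  exact (hx.2 P hP).trans_eq (sum_congr rfl fun e he => (if_pos (filter_subset _ _ he)).symm)

theorem exists_int_eq_of_mem_extremePoints [DecidableEq α]
    (hx : x ∈ (reinforcementQ edge E k u ∩ {x | ∀ e ∉ E, x e = 0}).extremePoints ℝ) :
    ∀ e ∈ E, ∃ n : ℤ, x e = n := by
  obtain ⟨⟨hxQ, hx0⟩, hext⟩ := mem_extremePoints.mp hx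
  by_contra! h
  obtain ⟨w, hw0, hw⟩ := exists_isBalancedDirection_ne_zero hxQ
    (let ⟨e, he, hfrac⟩ := h; ⟨e, mem_fractionalEdges.mpr ⟨he, fun ⟨n, hn⟩ => hfrac n hn⟩⟩)
  have hsupp (t : ℝ) : x + t • w ∈ {x | ∀ e ∉ E, x e = 0} := fun e he => by
    have hwe : w e = 0 := by_contra fun hwe => he (mem_fractionalEdges.mp (hw.1 e hwe)).1
    simp [hx0 e he, hwe]
  have hev := hw.eventually_add_smul_mem hxQ
  obtain ⟨t, ⟨h₁, h₂⟩, ht⟩ :=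
    (((hev.and ((continuous_neg.tendsto' 0 0 neg_zero).eventually hev)).filter_mono
      nhdsWithin_le_nhds).and (eventually_mem_nhdsWithin (s := {0}ᶜ))).exists
  have hseg : x ∈ openSegment ℝ (x + t • w) (x + (-t) • w) :=
    ⟨1 / 2, 1 / 2, by norm_num, by norm_num, by norm_num, by ext; simp; ring⟩
  have := (hext _ ⟨h₁, hsupp t⟩ _ ⟨h₂, hsupp (-t)⟩ hseg).1
  exact hw0 ((smul_eq_zero.mp (add_eq_left.mp this)).resolve_left ht)

end Reinforcement

theorem reinforcement_integer_optimum_general [Fintype V] [DecidableEq V] [DecidableEq α]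
    (edge : α → Finset V) (E : Finset α)
    (k : ℕ) (u : α → ℕ) (d : α → ℝ)
    (hne : (reinforcementQ edge E k u).Nonempty) :
    ∃ xs ∈ reinforcementQ edge E k u,
      (∀ e ∈ E, ∃ n : ℤ, xs e = n) ∧
      ∀ x ∈ reinforcementQ edge E k u,
        (∑ e ∈ E, d e * xs e) ≤ ∑ e ∈ E, d e * x e := by
  let cost : StrongDual ℝ (α → ℝ) := ∑ e ∈ E, d e • ContinuousLinearMap.proj e
  have hcost (x : α → ℝ) : cost x = ∑ e ∈ E, d e * x e := by simp [cost]
  obtain ⟨x₀, hx₀⟩ := hne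
  obtain ⟨xs, hxs, hmin⟩ :=
    (isCompact_reinforcementQ_inter edge E k u).exists_mem_extremePoints_forall_le
      ⟨_, ite_mem_reinforcementQ_inter hx₀⟩ cost
  refine ⟨xs, hxs.1.1, exists_int_eq_of_mem_extremePoints hxs, fun x hx => ?_⟩
  calc ∑ e ∈ E, d e * xs e ≤ ∑ e ∈ E, d e * (if e ∈ E then x e else 0) := by
        simpa only [hcost] using hmin _ (ite_mem_reinforcementQ_inter hx)
    _ = ∑ e ∈ E, d e * x e := sum_congr rfl fun e he => by rw [if_pos he]

/-- if the reinforcement LP `min { d·x : x ∈ Q }` is feasible,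
then it has an integer optimal solution. -/
theorem reinforcement_integer_optimum [Fintype V] [DecidableEq V] [DecidableEq α]
    (edge : α → Finset V) (E : Finset α)
    (hV : 1 ≤ Fintype.card V) (hE : ∀ e ∈ E, 2 ≤ (edge e).card)
    (k : ℕ) (hk : 0 < k) (u : α → ℕ) (d : α → ℝ) (hd : ∀ e ∈ E, 0 ≤ d e)
    (hne : (reinforcementQ edge E k u).Nonempty) :
    ∃ xs ∈ reinforcementQ edge E k u,
      (∀ e ∈ E, ∃ n : ℤ, xs e = n) ∧
      ∀ x ∈ reinforcementQ edge E k u,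
        (∑ e ∈ E, d e * xs e) ≤ ∑ e ∈ E, d e * x e :=
  reinforcement_integer_optimum_general edge E k u d hne
end
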